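/- arXiv:2405.15300 — 7 statements merged into one kernel-verified Lean document; each statement's English description precedes it below -/
import Mathlib

section
/- Let n ≥ 5. Then every (n-1)-tuple of intransitive subgroups of S_n is regular, while the (n-2)-tuple consisting of n-2 copies of a point stabilizer S_{n-1} is a non-regular tuple of intransitive subgroups of S_n; similarly, every (n-2)-tuple of intransitive subgroups of A_n is regular, while the (n-3)-tuple consisting of n-3 copies of a point stabilizer of A_n is non-regular. That is, R_intrans(S_n) = n-1 and R_intrans(A_n) = n-2. -/
/-!
An intransitive subgroup `H` preserves a proper nonempty subset `O` (one of its orbits), so `gHg⁻¹`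
preserves `g • O`. Since `Sₙ`, and `Aₙ` for `n ≥ 3`, are transitive on the subsets of each size,
the sets `Bᵢ = gᵢ • Oᵢ` may be any sets of the prescribed sizes. Choosing them one at a time so that
each splits a class of the partition of the points by membership in the previous ones, `k` sets cut
out at least `min (k + 1) n` classes. An element of `⋂ gᵢ Hᵢ gᵢ⁻¹` preserves every `Bᵢ`, hence
every class: for `k = n - 1` the classes are points, so it is trivial; for `k = n - 2` it moves at
most two points, so it is the identity or a transposition, and only the identity lies in `Aₙ`.

Conversely, `k` conjugates of a point stabilizer are the stabilizers of `k` points, and any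
nontrivial permutation of the at least two (for `Aₙ`: even permutation of the at least three)
remaining points lies in all of them.
-/

/-- The conjugate `g H g⁻¹` of a subgroup `H` by an element `g`. -/
def conjSub {G : Type*} [Group G] (g : G) (H : Subgroup G) : Subgroup G :=
  H.map (MulAut.conj g).toMonoidHom

/-- A `k`-tuple of subgroups is regular if some intersection of conjugates is trivial. -/
def IsRegularTuple {G : Type*} [Group G] {k : ℕ} (H : Fin k → Subgroup G) : Prop :=
  ∃ g : Fin k → G, (⨅ i, conjSub (g i) (H i)) = ⊥

open Finset MulAction Equiv
open scoped Pointwise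

section Combinatorics

variable {α β γ : Type*}

theorem Finset.card_image_le_card_image_of_comp [DecidableEq β] [DecidableEq γ] {s : Finset α}
    {f : α → β} {g : α → γ} (π : γ → β) (hπ : π ∘ g = f) :
    #(s.image f) ≤ #(s.image g) := by
  rw [← hπ, ← image_image]
  exact card_image_le

theorem Finset.card_image_lt_card_image_of_comp [DecidableEq β] [DecidableEq γ] {s : Finset α}
    {f : α → β} {g : α → γ} (π : γ → β) (hπ : π ∘ g = f) {x y : α} (hx : x ∈ s)
    (hy : y ∈ s) (hf : f x = f y) (hg : g x ≠ g y) :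
    #(s.image f) < #(s.image g) := by
  refine (card_image_le_card_image_of_comp π hπ).lt_of_ne fun heq => hg ?_
  rw [← hπ, ← image_image] at heq
  exact card_image_iff.mp heq (mem_image_of_mem g hx) (mem_image_of_mem g hy)
    ((congrFun hπ x).trans (hf.trans (congrFun hπ y).symm))

variable [DecidableEq α]

def memPattern {ι : Type*} (B : ι → Finset α) (x : α) : ι → Bool := fun i => x ∈ B i

variable [Fintype α]

theorem Finset.exists_card_eq_mem_notMem {x y : α} (hxy : x ≠ y) {m : ℕ} (hm : 0 < m)
    (hmα : m < Fintype.card α) : ∃ B : Finset α, #B = m ∧ x ∈ B ∧ y ∉ B := by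
  obtain ⟨B, hxB, hBy, hB⟩ := exists_subsuperset_card_eq (s := {x}) (t := univ.erase y)
    (by simpa using hxy) (by simpa [Nat.one_le_iff_ne_zero] using hm.ne')
    (by rw [card_erase_of_mem (mem_univ _), card_univ]; omega)
  exact ⟨B, hB, hxB (mem_singleton_self x), fun h => by simpa using hBy h⟩

theorem exists_card_eq_min_le_card_image_memPattern :
    ∀ {k : ℕ} (a : Fin k → ℕ), (∀ i, 0 < a i ∧ a i < Fintype.card α) →
      ∃ B : Fin k → Finset α, (∀ i, #(B i) = a i) ∧
        min (k + 1) (Fintype.card α) ≤ #(univ.image (memPattern B))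
  | 0, _, _ => by
    refine ⟨Fin.elim0, fun i => i.elim0, ?_⟩
    rcases isEmpty_or_nonempty α with _ | _
    · simp
    · exact (min_le_left _ _).trans (card_pos.mpr (univ_nonempty.image _))
  | k + 1, a, ha => by
    obtain ⟨B, hB, hcard⟩ :=
      exists_card_eq_min_le_card_image_memPattern (Fin.tail a) fun i => ha i.succ
    have htail (B₀ : Finset α) : Fin.tail ∘ memPattern (Fin.cons B₀ B) = memPattern B := rfl
    by_cases hdiscrete : Fintype.card α ≤ #(univ.image (memPattern B))
    · obtain ⟨B₀, -, hB₀⟩ := exists_subset_card_eq (s := univ) (ha 0).2.le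
      refine ⟨Fin.cons B₀ B, Fin.cases hB₀ hB, (min_le_right _ _).trans ?_⟩
      exact hdiscrete.trans (card_image_le_card_image_of_comp _ (htail B₀))
    · obtain ⟨x, -, y, -, hxy, hpat⟩ := exists_ne_map_eq_of_card_lt_of_maps_to
        (t := univ.image (memPattern B)) (by rw [card_univ]; omega)
        fun x _ => mem_image_of_mem _ (mem_univ x)
      obtain ⟨B₀, hB₀, hx, hy⟩ := exists_card_eq_mem_notMem hxy (ha 0).1 (ha 0).2
      refine ⟨Fin.cons B₀ B, Fin.cases hB₀ hB, ?_⟩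
      have hsplit := card_image_lt_card_image_of_comp _ (htail B₀) (mem_univ x) (mem_univ y)
        hpat fun h => by simpa [memPattern, hx, hy] using congrFun h 0
      omega

end Combinatorics

namespace Equiv.Perm

variable {α β : Type*} [Fintype α] [DecidableEq β]

theorem eq_one_of_card_le_card_image {σ : Perm α} {f : α → β} (hf : ∀ x, f (σ x) = f x)
    (hcard : Fintype.card α ≤ #(univ.image f)) : σ = 1 := by
  have hinj : Set.InjOn f (univ : Finset α) :=
    card_image_iff.mp (card_image_le.antisymm (by rwa [card_univ]))
  exact Equiv.ext fun x => hinj (mem_univ _) (mem_univ _) (hf x)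

variable [DecidableEq α]

theorem eq_one_of_sign_eq_one_of_card_support_le_two {σ : Perm α} (hσ : sign σ = 1)
    (hsupp : #σ.support ≤ 2) : σ = 1 := by
  by_contra hne
  have hswap : σ.IsSwap :=
    card_support_eq_two.mp (hsupp.antisymm (two_le_card_support_of_ne_one hne))
  rw [hswap.sign_eq] at hσ
  exact absurd hσ (by decide)

/-- If `f` is injective off one point `p`, then `σ` can only move `p` and `σ⁻¹ p`. -/
theorem card_support_le_two_of_card_le_card_image_add_one {σ : Perm α} {f : α → β}
    (hf : ∀ x, f (σ x) = f x) (hcard : Fintype.card α ≤ #(univ.image f) + 1) :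
    #σ.support ≤ 2 := by
  by_cases hinj : Fintype.card α ≤ #(univ.image f)
  · simp [eq_one_of_card_le_card_image hf hinj]
  obtain ⟨p, -, q, -, hpq, hfpq⟩ := exists_ne_map_eq_of_card_lt_of_maps_to
    (t := univ.image f) (by rw [card_univ]; omega) fun x _ => mem_image_of_mem f (mem_univ x)
  have himage : (univ.erase p).image f = univ.image f := by
    refine (image_subset_image (erase_subset _ _)).antisymm fun y hy => ?_
    obtain ⟨x, -, rfl⟩ := mem_image.mp hy
    by_cases hxp : x = p
    · exact mem_image.mpr ⟨q, mem_erase.mpr ⟨hpq.symm, mem_univ q⟩, by rw [hxp, hfpq]⟩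
    · exact mem_image_of_mem f (mem_erase.mpr ⟨hxp, mem_univ x⟩)
  have hinjOn : Set.InjOn f (univ.erase p) := card_image_iff.mp <| card_image_le.antisymm <| by
    rw [himage, card_erase_of_mem (mem_univ p), card_univ]; omega
  calc #σ.support ≤ #{p, σ⁻¹ p} := card_le_card fun x hx => by
        by_contra hx'
        simp only [mem_insert, mem_singleton, not_or, eq_inv_iff_eq] at hx'
        exact mem_support.mp hx <| hinjOn (by simpa using hx'.2) (by simpa using hx'.1) (hf x)
    _ ≤ 2 := card_le_two

end Equiv.Perm

section Action

variable {G α : Type*} [Group G] [MulAction G α]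

theorem conjSub_stabilizer {β : Type*} [MulAction G β] (g : G) (b : β) :
    conjSub g (stabilizer G b) = stabilizer G (g • b) :=
  (stabilizer_smul_eq_stabilizer_map_conj g b).symm

theorem not_isPretransitive_stabilizer [Nontrivial α] (a : α) :
    ¬ IsPretransitive (stabilizer G a) α := by
  intro h
  obtain ⟨b, hb⟩ := exists_ne a
  obtain ⟨g, hg⟩ := h.exists_smul_eq a b
  exact hb (hg.symm.trans g.2)

variable [DecidableEq α]

theorem iInf_conjSub_stabilizer_ne_bot {k : ℕ}
    (hfix : ∀ s : Finset α, #s ≤ k → ∃ σ : G, σ ≠ 1 ∧ ∀ x ∈ s, σ • x = x) (a : α)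
    (g : Fin k → G) : ⨅ i, conjSub (g i) (stabilizer G a) ≠ ⊥ := by
  obtain ⟨σ, hσ, hσfix⟩ := hfix (univ.image fun i => g i • a) (card_image_le.trans (by simp))
  simp_rw [conjSub_stabilizer]
  refine fun hbot => hσ ((Subgroup.eq_bot_iff_forall _).mp hbot σ ?_)
  exact Subgroup.mem_iInf.mpr fun i => hσfix _ (mem_image_of_mem _ (mem_univ i))

theorem memPattern_smul {ι : Type*} {B : ι → Finset α} {σ : G}
    (hσ : σ ∈ ⨅ i, stabilizer G (B i)) (x : α) : memPattern B (σ • x) = memPattern B x := by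
  funext i
  simp [memPattern, mem_stabilizer_finset.mp (Subgroup.mem_iInf.mp hσ i)]

variable [Fintype α]

theorem exists_finset_le_stabilizer_of_not_isPretransitive {H : Subgroup G}
    (hH : ¬ IsPretransitive H α) :
    ∃ O : Finset α, 0 < #O ∧ #O < Fintype.card α ∧ H ≤ stabilizer G O := by
  obtain ⟨x, hx⟩ : ∃ x : α, orbit H x ≠ Set.univ := by
    by_contra! h
    exact hH ⟨fun x y => mem_orbit_iff.mp (h x ▸ Set.mem_univ y)⟩
  refine ⟨(Set.toFinite (orbit H x)).toFinset, card_pos.mpr ⟨x, by simp [mem_orbit_self]⟩,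
    (card_lt_iff_ne_univ _).mpr (by simpa using hx),
    fun h hh => mem_stabilizer_finset.mpr fun b => ?_⟩
  simp only [Set.Finite.mem_toFinset, ← orbit_eq_iff]
  exact Iff.of_eq (congrArg (· = orbit H x) (orbit_smul (⟨h, hh⟩ : H) b))

theorem exists_iInf_conjSub_le_iInf_stabilizer
    (hG : ∀ m, IsPretransitive G (Set.powersetCard α m)) {k : ℕ} (H : Fin k → Subgroup G)
    (hH : ∀ i, ¬ IsPretransitive (H i) α) :
    ∃ g : Fin k → G, ∃ B : Fin k → Finset α,
      min (k + 1) (Fintype.card α) ≤ #(univ.image (memPattern B)) ∧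
        ⨅ i, conjSub (g i) (H i) ≤ ⨅ i, stabilizer G (B i) := by
  choose O hO hOα hHO using fun i => exists_finset_le_stabilizer_of_not_isPretransitive (hH i)
  obtain ⟨B, hB, hcard⟩ :=
    exists_card_eq_min_le_card_image_memPattern (fun i => #(O i)) fun i => ⟨hO i, hOα i⟩
  choose g hg using fun i => (hG #(O i)).exists_smul_eq ⟨O i, rfl⟩ ⟨B i, hB i⟩
  refine ⟨g, B, hcard, iInf_mono fun i => ?_⟩
  have hgO : g i • O i = B i := congrArg Subtype.val (hg i)
  rw [← hgO, ← conjSub_stabilizer]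
  exact Subgroup.map_mono (hHO i)

end Action

section SymmetricAlternating

variable {α : Type*} [Fintype α] [DecidableEq α]

theorem Equiv.Perm.exists_ne_one_forall_mem_smul_eq {k : ℕ} (hk : k + 2 ≤ Fintype.card α)
    (s : Finset α) (hs : #s ≤ k) : ∃ σ : Perm α, σ ≠ 1 ∧ ∀ x ∈ s, σ • x = x := by
  have : Nontrivial {x // x ∉ s} := Fintype.one_lt_card_iff_nontrivial.mp <| by
    rw [Fintype.card_subtype_compl, Fintype.card_coe]; omega
  obtain ⟨τ, hτ⟩ := exists_ne (1 : Perm {x // x ∉ s})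
  exact ⟨Perm.ofSubtype τ, (map_ne_one_iff _ Perm.ofSubtype_injective).mpr hτ,
    fun x hx => Perm.ofSubtype_apply_of_not_mem τ (not_not.mpr hx)⟩

theorem alternatingGroup.exists_ne_one_forall_mem_smul_eq {k : ℕ}
    (hk : k + 3 ≤ Fintype.card α) (s : Finset α) (hs : #s ≤ k) :
    ∃ σ : alternatingGroup α, σ ≠ 1 ∧ ∀ x ∈ s, σ • x = x := by
  have : Nontrivial (alternatingGroup (sᶜ : Finset α)) := nontrivial_of_three_le_card <| by
    rw [Nat.card_eq_fintype_card, Fintype.card_coe, card_compl]; omega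
  obtain ⟨τ, hτ⟩ := exists_ne (1 : alternatingGroup (sᶜ : Finset α))
  exact ⟨ofSubtype sᶜ τ, (map_ne_one_iff _ ofSubtype_injective).mpr hτ,
    fun x hx => Perm.ofSubtype_apply_of_not_mem _ (by simpa using hx)⟩

theorem isRegularTuple_perm {k : ℕ} (hk : Fintype.card α ≤ k + 1)
    (H : Fin k → Subgroup (Perm α)) (hH : ∀ i, ¬ IsPretransitive (H i) α) :
    IsRegularTuple H := by
  obtain ⟨g, B, hcard, hle⟩ :=
    exists_iInf_conjSub_le_iInf_stabilizer (fun _ => Set.powersetCard.isPretransitive) H hH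
  rw [min_eq_right hk] at hcard
  exact ⟨g, (Subgroup.eq_bot_iff_forall _).mpr fun σ hσ =>
    Perm.eq_one_of_card_le_card_image (memPattern_smul (hle hσ)) hcard⟩

theorem isRegularTuple_alternatingGroup (hα : 3 ≤ Fintype.card α) {k : ℕ}
    (hk : Fintype.card α ≤ k + 2) (H : Fin k → Subgroup (alternatingGroup α))
    (hH : ∀ i, ¬ IsPretransitive (H i) α) : IsRegularTuple H := by
  obtain ⟨g, B, hcard, hle⟩ := exists_iInf_conjSub_le_iInf_stabilizer
    (fun _ => Set.powersetCard.isPretransitive_alternatingGroup (by simpa using hα)) H hH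
  refine ⟨g, (Subgroup.eq_bot_iff_forall _).mpr fun σ hσ => Subtype.ext ?_⟩
  exact Perm.eq_one_of_sign_eq_one_of_card_support_le_two σ.2
    (Perm.card_support_le_two_of_card_le_card_image_add_one (memPattern_smul (hle hσ)) (by omega))

end SymmetricAlternating

theorem regularity_number_intransitive (n : ℕ) (hn : 5 ≤ n) :
    -- every (n-1)-tuple of intransitive subgroups of Sₙ is regular
    (∀ H : Fin (n - 1) → Subgroup (Equiv.Perm (Fin n)),
        (∀ i, ¬ MulAction.IsPretransitive ↥(H i) (Fin n)) → IsRegularTuple H) ∧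
    -- the point stabiliser Sₙ₋₁ is intransitive, and n-2 copies of it form a
    -- non-regular tuple
    (∀ a : Fin n,
      ¬ MulAction.IsPretransitive
          ↥(MulAction.stabilizer (Equiv.Perm (Fin n)) a) (Fin n) ∧
      ∀ g : Fin (n - 2) → Equiv.Perm (Fin n),
        (⨅ i, conjSub (g i) (MulAction.stabilizer (Equiv.Perm (Fin n)) a)) ≠ ⊥) ∧
    -- every (n-2)-tuple of intransitive subgroups of Aₙ is regular
    (∀ H : Fin (n - 2) → Subgroup ↥(alternatingGroup (Fin n)),
        (∀ i, ¬ MulAction.IsPretransitive ↥(H i) (Fin n)) → IsRegularTuple H) ∧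
    -- the point stabiliser in Aₙ is intransitive, and n-3 copies of it form a
    -- non-regular tuple
    (∀ a : Fin n,
      ¬ MulAction.IsPretransitive
          ↥(MulAction.stabilizer ↥(alternatingGroup (Fin n)) a) (Fin n) ∧
      ∀ g : Fin (n - 3) → ↥(alternatingGroup (Fin n)),
        (⨅ i, conjSub (g i)
          (MulAction.stabilizer ↥(alternatingGroup (Fin n)) a)) ≠ ⊥) := by
  have hcard : Fintype.card (Fin n) = n := Fintype.card_fin n
  have : Nontrivial (Fin n) := Fin.nontrivial_iff_two_le.mpr (by omega)
  refine ⟨fun H => isRegularTuple_perm (by omega) H, fun a => ?_,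
    fun H => isRegularTuple_alternatingGroup (by omega) (by omega) H, fun a => ?_⟩
  · exact ⟨not_isPretransitive_stabilizer a,
      iInf_conjSub_stabilizer_ne_bot (Perm.exists_ne_one_forall_mem_smul_eq (by omega)) a⟩
  · exact ⟨not_isPretransitive_stabilizer a, iInf_conjSub_stabilizer_ne_bot
      (alternatingGroup.exists_ne_one_forall_mem_smul_eq (by omega)) a⟩
end

section
/- Let ℓ ≥ 3 be a divisor of n with ℓ < n, and let X be an ℓ-partition of [n] with parts P_1, …, P_k. Fix α ∈ P_i and β ∈ P_j with i ≠ j, let t = (α β) ∈ S_n be the transposition swapping α and β, and let Y be the ℓ-partition of [n] whose parts are t(P_1), …, t(P_k). Then every permutation g ∈ S_n that stabilizes both X and Y maps the set {α, β} to itself. -/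
/-- The stabilizer in `Sym(Fin n)` of a partition of `Fin n`: the permutations mapping
parts to parts. -/
def partStab {n : ℕ} (Parts : Set (Set (Fin n))) : Subgroup (Equiv.Perm (Fin n)) where
  carrier := {g | ∀ P : Set (Fin n), P ∈ Parts ↔ ⇑g '' P ∈ Parts}
  one_mem' := by intro P; simp
  mul_mem' := by
    intro a b ha hb P
    rw [hb P]
    simpa [Set.image_image] using ha (⇑b '' P)
  inv_mem' := by
    intro a ha P
    have key : ⇑a '' (⇑a⁻¹ '' P) = P := by
      simp [Set.image_image]
    have := ha (⇑a⁻¹ '' P)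
    rw [key] at this
    exact this.symm

/-- `Parts` is a partition of `Fin n` all of whose parts have size `ℓ`. -/
def IsUniformPartition {n : ℕ} (ℓ : ℕ) (Parts : Set (Set (Fin n))) : Prop :=
  Setoid.IsPartition Parts ∧ ∀ P ∈ Parts, P.ncard = ℓ

lemma part_eq_part {n : ℕ} {X : Set (Set (Fin n))} (hX : Setoid.IsPartition X)
    {S S' : Set (Fin n)} (hS : S ∈ X) (hS' : S' ∈ X) {x : Fin n}
    (hx : x ∈ S) (hx' : x ∈ S') : S = S' := by
  obtain ⟨b, -, hb⟩ := hX.2 x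
  rw [hb S ⟨hS, hx⟩, hb S' ⟨hS', hx'⟩]

theorem swap_lemma (n ℓ : ℕ) (hℓ3 : 3 ≤ ℓ) (hdvd : ℓ ∣ n) (hℓn : ℓ < n)
    (X : Set (Set (Fin n))) (hX : IsUniformPartition ℓ X)
    (α β : Fin n)
    (hdiff : ∃ P ∈ X, ∃ Q ∈ X, P ≠ Q ∧ α ∈ P ∧ β ∈ Q)
    (Y : Set (Set (Fin n)))
    (hY : Y = (Set.image ⇑(Equiv.swap α β)) '' X) :
    ∀ g ∈ partStab X ⊓ partStab Y, ⇑g '' {α, β} = {α, β} := by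
  obtain ⟨P, hP, Q, hQ, hPQ, hαP, hβQ⟩ := hdiff
  have hXp : Setoid.IsPartition X := hX.1
  have hαQ : α ∉ Q := fun h => hPQ (part_eq_part hXp hP hQ hαP h)
  have hβP : β ∉ P := fun h => hPQ (part_eq_part hXp hP hQ h hβQ)
  have hαβ : α ≠ β := fun h => hβP (h ▸ hαP)
  have hdisj : ∀ x : Fin n, x ∈ P → x ∈ Q → False := fun x h1 h2 =>
    hPQ (part_eq_part hXp hP hQ h1 h2)
  set t : Equiv.Perm (Fin n) := Equiv.swap α β with ht
  have hmem_t : ∀ (S : Set (Fin n)) (y : Fin n), y ∈ ⇑t '' S ↔ t y ∈ S := by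
    intro S y
    rw [Set.mem_image_equiv, Equiv.symm_swap]
  -- small sets: find a third element
  have hthird : ∀ S ∈ X, ∀ a b : Fin n, ∃ y ∈ S, y ≠ a ∧ y ≠ b := by
    intro S hS a b
    have hcard : S.ncard = ℓ := hX.2 S hS
    by_contra h
    push_neg at h
    have hsub : S ⊆ {a, b} := by
      intro y hy
      rcases eq_or_ne y a with h1 | h1
      · exact Or.inl h1
      · exact Or.inr (h y hy h1)
    have h2 := Set.ncard_le_ncard hsub (Set.toFinite _)
    have h3 : ({a, b} : Set (Fin n)).ncard ≤ 2 := by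
      refine le_trans (Set.ncard_insert_le _ _) ?_
      simp [Set.ncard_singleton]
    omega
  -- the key invariant set
  set K : Set (Fin n) :=
    {x | ∀ S ∈ X, x ∈ S → ∀ T ∈ Y, x ∈ T → S ∩ T = {x}} with hK
  have hKeq : K = {α, β} := by
    ext x
    constructor
    · intro hx
      by_contra hxne
      rw [Set.mem_insert_iff, Set.mem_singleton_iff] at hxne
      push_neg at hxne
      obtain ⟨hxα, hxβ⟩ := hxne
      obtain ⟨S, ⟨hSX, hxS⟩, -⟩ := hXp.2 x
      by_cases hxP : x ∈ P
      · have hSP : S = P := part_eq_part hXp hSX hP hxS hxP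
        have hTY : ⇑t '' P ∈ Y := by rw [hY]; exact ⟨P, hP, rfl⟩
        have hxT : x ∈ ⇑t '' P := by
          rw [hmem_t, ht, Equiv.swap_apply_of_ne_of_ne hxα hxβ]; exact hxP
        have hint := hx S hSX hxS (⇑t '' P) hTY (hSP ▸ hxT)
        obtain ⟨y, hyP, hyα, hyx⟩ := hthird P hP α x
        have hyβ : y ≠ β := fun h => hβP (h ▸ hyP)
        have : y ∈ S ∩ ⇑t '' P := by
          refine ⟨hSP ▸ hyP, ?_⟩
          rw [hmem_t, ht, Equiv.swap_apply_of_ne_of_ne hyα hyβ]; exact hyP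
        rw [hint] at this
        exact hyx this
      · by_cases hxQ : x ∈ Q
        · have hSQ : S = Q := part_eq_part hXp hSX hQ hxS hxQ
          have hTY : ⇑t '' Q ∈ Y := by rw [hY]; exact ⟨Q, hQ, rfl⟩
          have hxT : x ∈ ⇑t '' Q := by
            rw [hmem_t, ht, Equiv.swap_apply_of_ne_of_ne hxα hxβ]; exact hxQ
          have hint := hx S hSX hxS (⇑t '' Q) hTY (hSQ ▸ hxT)
          obtain ⟨y, hyQ, hyβ, hyx⟩ := hthird Q hQ β x
          have hyα : y ≠ α := fun h => hαQ (h ▸ hyQ)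
          have : y ∈ S ∩ ⇑t '' Q := by
            refine ⟨hSQ ▸ hyQ, ?_⟩
            rw [hmem_t, ht, Equiv.swap_apply_of_ne_of_ne hyα hyβ]; exact hyQ
          rw [hint] at this
          exact hyx this
        · -- x outside P ∪ Q : its part is fixed by t
          have hαS : α ∉ S := fun h => hxP ((part_eq_part hXp hSX hP h hαP) ▸ hxS)
          have hβS : β ∉ S := fun h => hxQ ((part_eq_part hXp hSX hQ h hβQ) ▸ hxS)
          have htS : ⇑t '' S = S := by
            ext y
            rw [hmem_t]
            rcases eq_or_ne y α with h1 | h1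
            · subst h1; rw [ht, Equiv.swap_apply_left]
              exact ⟨fun h => absurd h hβS, fun h => absurd h hαS⟩
            · rcases eq_or_ne y β with h2 | h2
              · subst h2; rw [ht, Equiv.swap_apply_right]
                exact ⟨fun h => absurd h hαS, fun h => absurd h hβS⟩
              · rw [ht, Equiv.swap_apply_of_ne_of_ne h1 h2]
          have hSY : S ∈ Y := by rw [hY]; exact ⟨S, hSX, htS⟩
          have hint := hx S hSX hxS S hSY hxS
          rw [Set.inter_self] at hint
          obtain ⟨y, hyS, hyx, -⟩ := hthird S hSX x x
          rw [hint] at hyS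
          exact hyx hyS
    · intro hx
      rcases hx with hx | hx
      · -- x = α
        subst hx
        intro S hSX hxS T hTY hxT
        have hSP : S = P := part_eq_part hXp hSX hP hxS hαP
        rw [hY] at hTY
        obtain ⟨R, hRX, hRT⟩ := hTY
        have hαR : t x ∈ R := by rw [← hRT] at hxT; exact (hmem_t R x).mp hxT
        rw [ht, Equiv.swap_apply_left] at hαR
        have hRQ : R = Q := part_eq_part hXp hRX hQ hαR hβQ
        subst hSP; subst hRQ; rw [← hRT]
        ext y
        constructor
        · rintro ⟨hyP, hyT⟩
          rw [hmem_t] at hyT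
          rcases eq_or_ne y x with h1 | h1
          · exact h1
          · exfalso
            rcases eq_or_ne y β with h2 | h2
            · exact hβP (h2 ▸ hyP)
            · rw [ht, Equiv.swap_apply_of_ne_of_ne h1 h2] at hyT
              exact hdisj y hyP hyT
        · rintro rfl
          refine ⟨hαP, ?_⟩
          rw [hmem_t, ht, Equiv.swap_apply_left]
          exact hβQ
      · -- x = β
        rw [Set.mem_singleton_iff] at hx
        subst hx
        intro S hSX hxS T hTY hxT
        have hSQ : S = Q := part_eq_part hXp hSX hQ hxS hβQ
        rw [hY] at hTY
        obtain ⟨R, hRX, hRT⟩ := hTY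
        have hβR : t x ∈ R := by rw [← hRT] at hxT; exact (hmem_t R x).mp hxT
        rw [ht, Equiv.swap_apply_right] at hβR
        have hRP : R = P := part_eq_part hXp hRX hP hβR hαP
        subst hSQ; subst hRP; rw [← hRT]
        ext y
        constructor
        · rintro ⟨hyQ, hyT⟩
          rw [hmem_t] at hyT
          rcases eq_or_ne y x with h1 | h1
          · exact h1
          · exfalso
            rcases eq_or_ne y α with h2 | h2
            · exact hαQ (h2 ▸ hyQ)
            · rw [ht, Equiv.swap_apply_of_ne_of_ne h2 h1] at hyT
              exact hdisj y hyT hyQ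
        · rintro rfl
          refine ⟨hβQ, ?_⟩
          rw [hmem_t, ht, Equiv.swap_apply_right]
          exact hαP
  -- g preserves K
  have hgK : ∀ g ∈ partStab X ⊓ partStab Y, ∀ x ∈ K, g x ∈ K := by
    intro g hg x hx S hSX hgxS T hTY hgxT
    obtain ⟨hg1, hg2⟩ := Subgroup.mem_inf.mp hg
    have hS' : ⇑g⁻¹ '' S ∈ X := by
      have := hg1 (⇑g⁻¹ '' S)
      simp only [Set.image_image] at this
      simpa using this.mpr (by simpa [Set.image_image] using hSX)
    have hT' : ⇑g⁻¹ '' T ∈ Y := by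
      have := hg2 (⇑g⁻¹ '' T)
      simpa [Set.image_image] using this.mpr (by simpa [Set.image_image] using hTY)
    have hxS' : x ∈ ⇑g⁻¹ '' S := ⟨g x, hgxS, by simp⟩
    have hxT' : x ∈ ⇑g⁻¹ '' T := ⟨g x, hgxT, by simp⟩
    have hint := hx (⇑g⁻¹ '' S) hS' hxS' (⇑g⁻¹ '' T) hT' hxT'
    rw [← Set.image_inter (Equiv.injective _)] at hint
    have := congrArg (Set.image ⇑g) hint
    simpa [Set.image_image, ← Set.preimage_inter, Equiv.image_preimage] using this
  intro g hg
  have hg' : g⁻¹ ∈ partStab X ⊓ partStab Y := inv_mem hg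
  rw [← hKeq]
  ext y
  constructor
  · rintro ⟨x, hx, rfl⟩
    exact hgK g hg x hx
  · intro hy
    exact ⟨g⁻¹ y, hgK g⁻¹ hg' y hy, by simp⟩
end

section
/- Let G be a finite group and let H_1, …, H_k be core-free subgroups of G. Let x_1, …, x_t be a set of representatives of the conjugacy classes of elements of prime order in G. If Σ_{i=1}^t |x_i^G| · ∏_{j=1}^k fpr(x_i, G/H_j) < 1, then the tuple (H_1, …, H_k) is regular, i.e. there exist g_1, …, g_k ∈ G with ⋂_{j=1}^k g_j H_j g_j^{-1} = 1. -/
/-- The fixed point ratio of `x` on `G/H`, namely `|xᴳ ∩ H| / |xᴳ|`. -/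
noncomputable def fpr {G : Type*} [Group G] (x : G) (H : Subgroup G) : ℝ :=
  (Set.ncard {y | IsConj x y ∧ y ∈ H} : ℝ) / (Set.ncard {y | IsConj x y} : ℝ)

open Finset MulAction

theorem Set.ncard_univ_pi {ι α : Type*} [Fintype ι] (s : ι → Set α) :
    (Set.univ.pi s).ncard = ∏ i, (s i).ncard := by
  simp_rw [← Nat.card_coe_set_eq]
  rw [Nat.card_congr (Equiv.Set.univPi s), Nat.card_pi]

theorem Subgroup.exists_prime_orderOf_mem {G : Type*} [Group G] [Finite G] {K : Subgroup G}
    (hK : K ≠ ⊥) : ∃ y ∈ K, (orderOf y).Prime := by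
  have : Nontrivial K := K.nontrivial_iff_ne_bot.mpr hK
  obtain ⟨p, hp, hdvd⟩ := Nat.exists_prime_and_dvd (Finite.one_lt_card (α := K)).ne'
  have : Fact p.Prime := ⟨hp⟩
  obtain ⟨z, hz⟩ := exists_prime_orderOf_dvd_card' p hdvd
  exact ⟨z, z.2, by rwa [Subgroup.orderOf_coe, hz]⟩

theorem MulAction.ncard_inv_smul_mem_mul_ncard_orbit {G X : Type*} [Group G] [MulAction G X]
    [Finite G] (b : X) (s : Set X) :
    {g : G | g⁻¹ • b ∈ s}.ncard * (orbit G b).ncard = Nat.card G * (orbit G b ∩ s).ncard := by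
  classical
  have := Fintype.ofFinite G
  set O := univ.image (· • b : G → X)
  have hO : orbit G b = O := by ext; simp [O, mem_orbit_iff]
  have hOs : orbit G b ∩ s = ↑(O.filter (· ∈ s)) := by simp only [hO, coe_filter]; rfl
  have hmem (g : G) {z : X} (hz : z ∈ O) : g • z ∈ O := by
    obtain ⟨a, -, rfl⟩ := mem_image.mp hz
    exact mem_image.mpr ⟨g * a, mem_univ _, mul_smul ..⟩
  rw [hOs, hO, Set.ncard_coe_finset, Set.ncard_coe_finset, Set.ncard_eq_toFinset_card',
    Set.toFinset_ofPred, mul_comm, Nat.card_eq_fintype_card, ← card_univ]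
  refine (card_mul_eq_card_mul (fun g z => g⁻¹ • z ∈ s) (fun g _ => ?_) fun z hz => ?_).symm
  · refine card_nbij' (g⁻¹ • ·) (g • ·) (fun z hz => ?_) (fun z hz => ?_) (fun z _ => ?_)
      (fun z _ => ?_) <;> simp_all [bipartiteAbove]
  · obtain ⟨h, -, rfl⟩ := mem_image.mp hz
    refine card_nbij' (h⁻¹ * ·) (h * ·) (fun g hg => ?_) (fun g hg => ?_) (fun g _ => ?_)
      (fun g _ => ?_) <;> simp_all [bipartiteBelow, mul_smul]

section Conjugates

variable {G : Type*} [Group G]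

theorem mem_conjSub_iff {g y : G} {H : Subgroup G} : y ∈ conjSub g H ↔ g⁻¹ * y * g ∈ H := by
  simp only [conjSub, Subgroup.mem_map, MulEquiv.coe_toMonoidHom, MulAut.conj_apply]
  exact ⟨by rintro ⟨h, hh, rfl⟩; simpa [mul_assoc] using hh, fun h => ⟨_, h, by group⟩⟩

theorem fpr_congr {x y : G} (h : IsConj x y) (H : Subgroup G) : fpr x H = fpr y H := by
  have hxy : ∀ z, IsConj x z ↔ IsConj y z := fun z => ⟨h.symm.trans, h.trans⟩
  simp only [fpr, hxy]

variable [Finite G]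

theorem ncard_mem_conjSub_mul_ncard_isConj (y : G) (H : Subgroup G) :
    {a : G | y ∈ conjSub a H}.ncard * {z | IsConj y z}.ncard
      = Nat.card G * {z | IsConj y z ∧ z ∈ H}.ncard := by
  have horbit : orbit (ConjAct G) y = {z | IsConj y z} := by
    ext z; rw [ConjAct.mem_orbit_conjAct, Set.mem_ofPred_eq, isConj_comm]
  have : Finite (ConjAct G) := ‹Finite G›
  have key := ncard_inv_smul_mem_mul_ncard_orbit (G := ConjAct G) y H
  rw [horbit] at key
  -- `ConjAct G` is `G` by definition, which is what the `rfl`s below use.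
  convert key using 2
  · refine congrArg Set.ncard (Set.ext fun a => ?_)
    simp only [mem_conjSub_iff, Set.mem_ofPred_eq, ConjAct.smul_def, ConjAct.ofConjAct_inv,
      inv_inv, SetLike.mem_coe]
    rfl
  · rfl
  · rfl

theorem ncard_mem_conjSub_eq (y : G) (H : Subgroup G) :
    ({a : G | y ∈ conjSub a H}.ncard : ℝ) = Nat.card G * fpr y H := by
  have hpos : ({z | IsConj y z}.ncard : ℝ) ≠ 0 := by
    exact_mod_cast (Set.ncard_pos (Set.toFinite _)).mpr ⟨y, IsConj.refl y⟩ |>.ne'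
  rw [fpr, mul_div_assoc', eq_div_iff hpos]
  exact_mod_cast ncard_mem_conjSub_mul_ncard_isConj y H

theorem ncard_forall_mem_conjSub_eq {ι : Type*} [Fintype ι] (y : G) (H : ι → Subgroup G) :
    ({g : ι → G | ∀ j, y ∈ conjSub (g j) (H j)}.ncard : ℝ)
      = Nat.card G ^ Fintype.card ι * ∏ j, fpr y (H j) := by
  have hpi : {g : ι → G | ∀ j, y ∈ conjSub (g j) (H j)}
      = Set.univ.pi fun j => {a | y ∈ conjSub a (H j)} := by
    ext; simp
  rw [hpi, Set.ncard_univ_pi]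
  push_cast
  simp_rw [ncard_mem_conjSub_eq, prod_mul_distrib, prod_const, card_univ]

theorem pow_card_le_sum_ncard_mul_prod_fpr {ι κ : Type*} [Fintype ι] [Fintype κ]
    (H : ι → Subgroup G) (x : κ → G) (hx : ∀ y : G, (orderOf y).Prime → ∃ i, IsConj (x i) y)
    (hH : ∀ g : ι → G, (⨅ j, conjSub (g j) (H j)) ≠ ⊥) :
    (Nat.card G : ℝ) ^ Fintype.card ι ≤ Nat.card G ^ Fintype.card ι *
      ∑ i, ({y | IsConj (x i) y}.ncard : ℝ) * ∏ j, fpr (x i) (H j) := by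
  classical
  have := Fintype.ofFinite G
  set C := fun i => {y | IsConj (x i) y}.toFinset
  have hcover : Set.univ ⊆ ⋃ i, ⋃ y ∈ C i, {g : ι → G | ∀ j, y ∈ conjSub (g j) (H j)} := by
    intro g _
    obtain ⟨y, hyK, hy⟩ := Subgroup.exists_prime_orderOf_mem (hH g)
    obtain ⟨i, hi⟩ := hx y hy
    simp only [Subgroup.mem_iInf] at hyK
    simp only [Set.mem_iUnion]
    exact ⟨i, y, by simpa [C] using hi, hyK⟩
  have hcount := (Set.ncard_le_ncard hcover).trans <| (Set.ncard_iUnion_le_of_fintype _).trans <|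
    sum_le_sum fun i _ => (C i).set_ncard_biUnion_le _
  rw [Set.ncard_univ, Nat.card_fun, Nat.card_eq_fintype_card (α := ι)] at hcount
  calc (Nat.card G : ℝ) ^ Fintype.card ι
      ≤ ∑ i, ∑ y ∈ C i, ({g : ι → G | ∀ j, y ∈ conjSub (g j) (H j)}.ncard : ℝ) := by
        exact_mod_cast hcount
    _ = ∑ i, ∑ y ∈ C i, (Nat.card G : ℝ) ^ Fintype.card ι * ∏ j, fpr (x i) (H j) := by
        refine sum_congr rfl fun i _ => sum_congr rfl fun y hy => ?_
        have hy : IsConj (x i) y := by simpa [C] using hy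
        simp_rw [ncard_forall_mem_conjSub_eq, fpr_congr hy]
    _ = _ := by
        rw [mul_sum]
        refine sum_congr rfl fun i _ => ?_
        rw [sum_const, nsmul_eq_mul, Set.ncard_eq_toFinset_card']
        ring

end Conjugates

theorem regular_of_fpr_sum_lt_one_general {G : Type*} [Group G] [Fintype G] {k t : ℕ}
    (H : Fin k → Subgroup G)
    (x : Fin t → G)
    (hrep : ∀ y : G, (orderOf y).Prime → ∃! i, IsConj (x i) y)
    (hsum : ∑ i, (Set.ncard {y | IsConj (x i) y} : ℝ) * ∏ j, fpr (x i) (H j) < 1) :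
    IsRegularTuple H := by
  by_contra hreg
  have hcount := pow_card_le_sum_ncard_mul_prod_fpr H x (fun y hy => (hrep y hy).exists)
    fun g hg => hreg ⟨g, hg⟩
  rw [Fintype.card_fin] at hcount
  have hpos : (0 : ℝ) < Nat.card G ^ k := pow_pos (Nat.cast_pos.mpr Nat.card_pos) k
  linarith [mul_lt_mul_of_pos_left hsum hpos]

theorem regular_of_fpr_sum_lt_one {G : Type*} [Group G] [Fintype G] {k t : ℕ}
    (H : Fin k → Subgroup G) (hH : ∀ j, (H j).normalCore = ⊥)
    (x : Fin t → G) (hx : ∀ i, (orderOf (x i)).Prime)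
    (hrep : ∀ y : G, (orderOf y).Prime → ∃! i, IsConj (x i) y)
    (hsum : ∑ i, (Set.ncard {y | IsConj (x i) y} : ℝ) * ∏ j, fpr (x i) (H j) < 1) :
    IsRegularTuple H :=
  regular_of_fpr_sum_lt_one_general H x hrep hsum
end

section
/- Let G be a finite group acting faithfully on a finite set Ω, and let B ⊆ Ω be a base for G such that no proper subset of B is a base. Then G contains an independent subset of cardinality |B|. In particular, the size of any minimal base for any faithful action of G is at most the independence number σ(G). -/
/-- The independence number of a finite group: the maximal size of a subset `S`
such that no element of `S` lies in the subgroup generated by the others. -/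
noncomputable def indepNumber (G : Type*) [Group G] [DecidableEq G] : ℕ :=
  sSup {k : ℕ | ∃ S : Finset G, S.card = k ∧
    ∀ x ∈ S, x ∉ Subgroup.closure ((S.erase x : Finset G) : Set G)}

theorem minimal_base_gives_independent_set {G Ω : Type*} [Group G] [Fintype G]
    [DecidableEq G] [Fintype Ω] [MulAction G Ω]
    (hfaithful : ∀ g : G, (∀ ω : Ω, g • ω = ω) → g = 1)
    (B : Finset Ω)
    (hbase : ∀ g : G, (∀ ω ∈ B, g • ω = ω) → g = 1)
    (hmin : ∀ B' : Finset Ω, B' ⊂ B → ∃ g : G, g ≠ 1 ∧ ∀ ω ∈ B', g • ω = ω) :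
    (∃ S : Finset G, S.card = B.card ∧
        ∀ x ∈ S, x ∉ Subgroup.closure ((S.erase x : Finset G) : Set G)) ∧
      B.card ≤ indepNumber G := by
  classical
  have hchoice : ∀ b ∈ B, ∃ g : G, g ≠ 1 ∧ ∀ ω ∈ B.erase b, g • ω = ω := by
    intro b hb
    exact hmin (B.erase b) (Finset.erase_ssubset hb)
  choose f hf1 hf2 using hchoice
  -- f fixes b implies f = 1 contradiction
  have hnotfix : ∀ b (hb : b ∈ B), f b hb • b ≠ b := by
    intro b hb hfix
    refine hf1 b hb (hbase _ ?_)
    intro ω hω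
    by_cases hωb : ω = b
    · simpa [hωb] using hfix
    · exact hf2 b hb ω (Finset.mem_erase.mpr ⟨hωb, hω⟩)
  -- injectivity
  have hinj : ∀ b (hb : b ∈ B) c (hc : c ∈ B), f b hb = f c hc → b = c := by
    intro b hb c hc heq
    by_contra hbc
    refine hf1 b hb (hbase _ ?_)
    intro ω hω
    by_cases hωb : ω = b
    · subst hωb
      rw [heq]
      exact hf2 c hc ω (Finset.mem_erase.mpr ⟨hbc, hω⟩)
    · exact hf2 b hb ω (Finset.mem_erase.mpr ⟨hωb, hω⟩)
  set S : Finset G := B.attach.image (fun b => f b.1 b.2) with hS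
  have hcard : S.card = B.card := by
    rw [hS, Finset.card_image_of_injective, Finset.card_attach]
    intro b c h
    exact Subtype.ext (hinj b.1 b.2 c.1 c.2 h)
  have hindep : ∀ x ∈ S, x ∉ Subgroup.closure ((S.erase x : Finset G) : Set G) := by
    intro x hx hmem
    obtain ⟨⟨b, hb⟩, -, rfl⟩ := Finset.mem_image.mp hx
    -- everything in S.erase (f b hb) fixes b
    have hsub : ((S.erase (f b hb) : Finset G) : Set G) ⊆
        ((MulAction.stabilizer G b : Subgroup G) : Set G) := by
      intro y hy
      simp only [Finset.coe_erase, Set.mem_diff, Finset.mem_coe] at hy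
      obtain ⟨hyS, hyne⟩ := hy
      obtain ⟨⟨c, hc⟩, -, rfl⟩ := Finset.mem_image.mp hyS
      have hcb : c ≠ b := by
        intro h
        subst h
        exact hyne rfl
      show f c hc ∈ MulAction.stabilizer G b
      exact hf2 c hc b (Finset.mem_erase.mpr ⟨Ne.symm hcb, hb⟩)
    have hle : Subgroup.closure ((S.erase (f b hb) : Finset G) : Set G) ≤
        MulAction.stabilizer G b := (Subgroup.closure_le _).mpr hsub
    exact hnotfix b hb (hle hmem)
  refine ⟨⟨S, hcard, hindep⟩, ?_⟩
  apply le_csSup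
  · refine ⟨Fintype.card G, ?_⟩
    rintro k ⟨T, rfl, -⟩
    exact Finset.card_le_card (Finset.subset_univ T) |>.trans (le_of_eq (Finset.card_univ))
  · exact ⟨S, hcard, hindep⟩
end

section
/- Let q ≥ 3 be a prime power with q ≢ 1 (mod 3), let G = SL_3(F_q) acting naturally on V = F_q^3, let H be the stabilizer in G of a 1-dimensional subspace of V, and let K be the stabilizer in G of a 2-dimensional subspace of V. Then the 4-tuple (H, H, K, K) is non-regular: for all g_1, g_2, g_3, g_4 ∈ G, the intersection g_1 H g_1^{-1} ∩ g_2 H g_2^{-1} ∩ g_3 K g_3^{-1} ∩ g_4 K g_4^{-1} is nontrivial. -/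
open Matrix
/-- The stabilizer in `SL(ι, F)` of a subspace `U` of the natural module. -/
def slSubspaceStab {ι F : Type*} [Fintype ι] [DecidableEq ι] [CommRing F]
    (U : Submodule F (ι → F)) : Subgroup (Matrix.SpecialLinearGroup ι F) where
  carrier := {g | ∀ v : ι → F, v ∈ U ↔ (↑g : Matrix ι ι F) *ᵥ v ∈ U}
  one_mem' := by intro v; simp
  mul_mem' := by
    intro a b ha hb v
    rw [hb v]
    simpa [Matrix.mulVec_mulVec] using ha ((↑b : Matrix ι ι F) *ᵥ v)
  inv_mem' := by
    intro a ha v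
    have key : (↑a : Matrix ι ι F) *ᵥ ((↑(a⁻¹) : Matrix ι ι F) *ᵥ v) = v := by
      rw [Matrix.mulVec_mulVec, ← Matrix.SpecialLinearGroup.coe_mul, mul_inv_cancel]
      simp
    have := ha ((↑(a⁻¹) : Matrix ι ι F) *ᵥ v)
    rw [key] at this
    exact this.symm

/-!
Conjugating a subspace stabilizer by `g` gives the stabilizer of the translated subspace, so it
suffices to find a nontrivial element of `SL₃(F)` stabilizing two points `P₁, P₂` and two lines
`L₁, L₂`. Choose a nonzero `u ∈ L₁ ∩ L₂` and a linear form `f ≠ 0` vanishing on `P₁ + P₂`. Every map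
`v ↦ a • (v + f v • u)` stabilizes each subspace containing `u` and each subspace of `ker f`. If
`f u = 0` take `a = 1` (a transvection); otherwise pick `a ∉ {0, 1}`, which needs `|F| ≥ 3`, and
rescale `u` so that the determinant `a³ (1 + f u)` is `1`; this map acts on `P₁` as `a ≠ 1`.
-/

open Matrix Module

section SubspaceStabilizer

variable {ι F : Type*} [Fintype ι] [DecidableEq ι]

theorem mem_slSubspaceStab_iff [CommRing F] {g : SpecialLinearGroup ι F}
    {U : Submodule F (ι → F)} :
    g ∈ slSubspaceStab U ↔ ∀ v, v ∈ U ↔ (g : Matrix ι ι F) *ᵥ v ∈ U :=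
  Iff.rfl

theorem conjSub_slSubspaceStab [CommRing F] (g : SpecialLinearGroup ι F)
    (U : Submodule F (ι → F)) :
    conjSub g (slSubspaceStab U) = slSubspaceStab (U.map g.toLin'.toLinearMap) := by
  ext h
  rw [conjSub, Subgroup.mem_map_equiv, mem_slSubspaceStab_iff, mem_slSubspaceStab_iff]
  refine g.toLin'.toEquiv.forall_congr fun v => ?_
  have hconj : ((g⁻¹ * h * g : SpecialLinearGroup ι F) : Matrix ι ι F) *ᵥ v =
      g.toLin'.symm ((h : Matrix ι ι F) *ᵥ g.toLin' v) := by
    rw [SpecialLinearGroup.toLin'_symm_apply, SpecialLinearGroup.toLin'_apply, Matrix.toLin'_apply,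
      Matrix.toLin'_apply, mulVec_mulVec, mulVec_mulVec]
    rfl
  simp only [Submodule.mem_map_equiv, LinearEquiv.coe_toEquiv, LinearEquiv.symm_apply_apply,
    MulAut.conj_symm_apply, hconj]

theorem mem_slSubspaceStab_of_mapsTo [Field F] {g : SpecialLinearGroup ι F}
    {T : Submodule F (ι → F)} (hg : ∀ v ∈ T, (g : Matrix ι ι F) *ᵥ v ∈ T) :
    g ∈ slSubspaceStab T := by
  have hmap : T.map g.toLin'.toLinearMap = T :=
    Submodule.eq_of_le_of_finrank_eq (Submodule.map_le_iff_le_comap.2 hg)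
      (LinearEquiv.finrank_map_eq _ T)
  have hcomap : T.comap g.toLin'.toLinearMap = T := by
    conv_lhs => rw [← hmap]
    exact T.comap_map_eq_of_injective g.toLin'.injective
  exact fun v => (SetLike.ext_iff.1 hcomap v).symm

end SubspaceStabilizer

section ScaledTransvection

variable {ι F : Type*} [Fintype ι] [DecidableEq ι] [Field F]

noncomputable def scaledTransvection (a : F) (f : Dual F (ι → F)) (u : ι → F)
    (h : a ^ Fintype.card ι * (1 + f u) = 1) : SpecialLinearGroup ι F :=
  ⟨a • LinearMap.toMatrix' (LinearMap.transvection f u), by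
    rw [det_smul, LinearMap.det_toMatrix', LinearMap.transvection.det, h]⟩

variable {a : F} {f : Dual F (ι → F)} {u : ι → F} {h : a ^ Fintype.card ι * (1 + f u) = 1}

theorem scaledTransvection_mulVec (v : ι → F) :
    (scaledTransvection a f u h : Matrix ι ι F) *ᵥ v = a • (v + f v • u) := by
  change (a • LinearMap.toMatrix' (LinearMap.transvection f u)) *ᵥ v = _
  rw [smul_mulVec, LinearMap.toMatrix'_mulVec, LinearMap.transvection.apply]

theorem scaledTransvection_mem_slSubspaceStab_of_mem {T : Submodule F (ι → F)} (hu : u ∈ T) :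
    scaledTransvection a f u h ∈ slSubspaceStab T :=
  mem_slSubspaceStab_of_mapsTo fun v hv => by
    rw [scaledTransvection_mulVec]
    exact T.smul_mem a (T.add_mem hv (T.smul_mem _ hu))

theorem scaledTransvection_mem_slSubspaceStab_of_le_ker {T : Submodule F (ι → F)}
    (hT : T ≤ LinearMap.ker f) : scaledTransvection a f u h ∈ slSubspaceStab T :=
  mem_slSubspaceStab_of_mapsTo fun v hv => by
    rw [scaledTransvection_mulVec, LinearMap.mem_ker.1 (hT hv), zero_smul, add_zero]
    exact T.smul_mem a hv

end ScaledTransvection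

section NontrivialStabilizer

variable {ι F : Type*} [Fintype ι] [DecidableEq ι] [Field F]

theorem exists_ne_one_mem_slSubspaceStab (hF : ∃ a : F, a ≠ 0 ∧ a ≠ 1)
    {S : Submodule F (ι → F)} (hS₀ : S ≠ ⊥) (hS : S ≠ ⊤) {u : ι → F} (hu : u ≠ 0) :
    ∃ g : SpecialLinearGroup ι F, g ≠ 1 ∧ (∀ T ≤ S, g ∈ slSubspaceStab T) ∧
      ∀ T : Submodule F (ι → F), u ∈ T → g ∈ slSubspaceStab T := by
  obtain ⟨x, -, hxS⟩ := SetLike.exists_of_lt (lt_top_iff_ne_top.2 hS)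
  obtain ⟨f, hfx, hSf⟩ := S.exists_le_ker_of_notMem hxS
  have ne_one {g : SpecialLinearGroup ι F} {v : ι → F} (hv : (g : Matrix ι ι F) *ᵥ v ≠ v) :
      g ≠ 1 := by
    rintro rfl
    exact hv (one_mulVec v)
  by_cases hfu : f u = 0
  · refine ⟨scaledTransvection 1 f u (by rw [hfu]; ring), ne_one (v := x) ?_,
      fun T hT => scaledTransvection_mem_slSubspaceStab_of_le_ker (hT.trans hSf),
      fun T hT => scaledTransvection_mem_slSubspaceStab_of_mem hT⟩
    rw [scaledTransvection_mulVec, one_smul, Ne, add_eq_left, smul_eq_zero, not_or]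
    exact ⟨hfx, hu⟩
  · obtain ⟨a, ha₀, ha₁⟩ := hF
    obtain ⟨w, hwS, hw⟩ := Submodule.exists_mem_ne_zero_of_ne_bot hS₀
    set c := ((a ^ Fintype.card ι)⁻¹ - 1) / f u
    refine ⟨scaledTransvection a f (c • u) ?_, ne_one (v := w) ?_,
      fun T hT => scaledTransvection_mem_slSubspaceStab_of_le_ker (hT.trans hSf),
      fun T hT => scaledTransvection_mem_slSubspaceStab_of_mem (T.smul_mem c hT)⟩
    · rw [map_smul, smul_eq_mul, div_mul_cancel₀ _ hfu, add_sub_cancel,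
        mul_inv_cancel₀ (pow_ne_zero _ ha₀)]
    · rw [scaledTransvection_mulVec, LinearMap.mem_ker.1 (hSf hwS), zero_smul, add_zero]
      exact fun haw => ha₁ (smul_left_injective F hw (haw.trans (one_smul F w).symm))

theorem slSubspaceStab_inf_ne_bot (hF : ∃ a : F, a ≠ 0 ∧ a ≠ 1)
    {P₁ P₂ L₁ L₂ : Submodule F (ι → F)} (hP₁ : 0 < finrank F P₁)
    (hP : finrank F P₁ + finrank F P₂ < Fintype.card ι)
    (hL : Fintype.card ι < finrank F L₁ + finrank F L₂) :
    slSubspaceStab P₁ ⊓ slSubspaceStab P₂ ⊓ slSubspaceStab L₁ ⊓ slSubspaceStab L₂ ≠ ⊥ := by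
  rw [← finrank_fintype_fun_eq_card F] at hP hL
  have hPtop : P₁ ⊔ P₂ ≠ ⊤ := fun htop => by
    have := Submodule.finrank_add_le_finrank_add_finrank P₁ P₂
    rw [htop, finrank_top] at this
    omega
  have hLbot : L₁ ⊓ L₂ ≠ ⊥ := fun hbot =>
    (Submodule.finrank_add_finrank_le_of_disjoint (disjoint_iff.2 hbot)).not_gt hL
  obtain ⟨u, hu, hu₀⟩ := Submodule.exists_mem_ne_zero_of_ne_bot hLbot
  obtain ⟨g, hg, hgP, hgu⟩ := exists_ne_one_mem_slSubspaceStab hF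
    (ne_bot_of_le_ne_bot (Submodule.one_le_finrank_iff.1 hP₁) le_sup_left) hPtop hu₀
  refine fun hbot => hg ((Subgroup.eq_bot_iff_forall _).1 hbot g ?_)
  exact ⟨⟨⟨hgP _ le_sup_left, hgP _ le_sup_right⟩, hgu _ (Submodule.mem_inf.1 hu).1⟩,
    hgu _ (Submodule.mem_inf.1 hu).2⟩

end NontrivialStabilizer

theorem exists_ne_zero_ne_one_of_three_le_card {F : Type*} [Zero F] [One F] [Fintype F]
    (h : 3 ≤ Fintype.card F) : ∃ a : F, a ≠ 0 ∧ a ≠ 1 := by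
  classical
  obtain ⟨a, -, ha⟩ := Finset.exists_mem_notMem_of_card_lt_card
    (s := ({0, 1} : Finset F)) (t := Finset.univ)
    (Finset.card_le_two.trans_lt (by rwa [Finset.card_univ]))
  exact ⟨a, by simpa [not_or] using ha⟩

theorem sl3_point_line_four_tuple_nonregular_general {F : Type*} [Field F] [Fintype F]
    (q : ℕ) (hq : Fintype.card F = q) (hq3 : 3 ≤ q)
    (U W : Submodule F (Fin 3 → F))
    (hU : Module.finrank F ↥U = 1) (hW : Module.finrank F ↥W = 2) :
    ∀ g₁ g₂ g₃ g₄ : Matrix.SpecialLinearGroup (Fin 3) F,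
      conjSub g₁ (slSubspaceStab U) ⊓ conjSub g₂ (slSubspaceStab U) ⊓
        conjSub g₃ (slSubspaceStab W) ⊓ conjSub g₄ (slSubspaceStab W) ≠ ⊥ := by
  intro g₁ g₂ g₃ g₄
  have hrank (g : SpecialLinearGroup (Fin 3) F) (X : Submodule F (Fin 3 → F)) :
      finrank F (X.map g.toLin'.toLinearMap) = finrank F X :=
    LinearEquiv.finrank_map_eq _ X
  simp only [conjSub_slSubspaceStab]
  refine slSubspaceStab_inf_ne_bot (exists_ne_zero_ne_one_of_three_le_card (hq ▸ hq3)) ?_ ?_ ?_ <;>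
    simp only [hrank, hU, hW, Fintype.card_fin] <;> norm_num

theorem sl3_point_line_four_tuple_nonregular {F : Type*} [Field F] [Fintype F]
    (q : ℕ) (hq : Fintype.card F = q) (hq3 : 3 ≤ q) (hqmod : q % 3 ≠ 1)
    (U W : Submodule F (Fin 3 → F))
    (hU : Module.finrank F ↥U = 1) (hW : Module.finrank F ↥W = 2) :
    ∀ g₁ g₂ g₃ g₄ : Matrix.SpecialLinearGroup (Fin 3) F,
      conjSub g₁ (slSubspaceStab U) ⊓ conjSub g₂ (slSubspaceStab U) ⊓
        conjSub g₃ (slSubspaceStab W) ⊓ conjSub g₄ (slSubspaceStab W) ≠ ⊥ :=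
  sl3_point_line_four_tuple_nonregular_general q hq hq3 U W hU hW
end

section
/- Let n ≥ 5, let G = GL_n(F_2) acting naturally on V = F_2^n, let H be the stabilizer in G of a nonzero vector of V, and let K be the stabilizer in G of an (n-1)-dimensional subspace of V. Then for all g_1, …, g_{n-1} ∈ G and h_1, …, h_{n-2} ∈ G, the intersection (⋂_{i=1}^{n-1} g_i H g_i^{-1}) ∩ (⋂_{j=1}^{n-2} h_j K h_j^{-1}) is nontrivial; that is, the (2n-3)-tuple consisting of n-1 copies of H and n-2 copies of K is non-regular. -/
open Matrix

/-- The stabilizer in `GL(ι, F)` of a vector `v` of the natural module. -/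
def glVecStab {ι F : Type*} [Fintype ι] [DecidableEq ι] [CommRing F]
    (v : ι → F) : Subgroup (Matrix.GeneralLinearGroup ι F) where
  carrier := {g | (↑g : Matrix ι ι F) *ᵥ v = v}
  one_mem' := by simp
  mul_mem' := by
    intro a b ha hb
    rw [Set.mem_setOf_eq] at ha hb ⊢
    rw [Units.val_mul, ← Matrix.mulVec_mulVec, hb, ha]
  inv_mem' := by
    intro a ha
    rw [Set.mem_setOf_eq] at ha ⊢
    conv_lhs => rw [← ha]
    rw [Matrix.mulVec_mulVec, ← Units.val_mul, inv_mul_cancel]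
    simp
  
/-- The stabilizer in `GL(ι, F)` of a subspace `W` of the natural module. -/
def glSubspaceStab {ι F : Type*} [Fintype ι] [DecidableEq ι] [CommRing F]
    (W : Submodule F (ι → F)) : Subgroup (Matrix.GeneralLinearGroup ι F) where
  carrier := {g | ∀ v : ι → F, v ∈ W ↔ (↑g : Matrix ι ι F) *ᵥ v ∈ W}
  one_mem' := by intro v; simp
  mul_mem' := by
    intro a b ha hb v
    rw [hb v]
    simpa [Matrix.mulVec_mulVec, Units.val_mul] using ha ((↑b : Matrix ι ι F) *ᵥ v)
  inv_mem' := by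
    intro a ha v
    have key : (↑a : Matrix ι ι F) *ᵥ ((↑(a⁻¹) : Matrix ι ι F) *ᵥ v) = v := by
      rw [Matrix.mulVec_mulVec, ← Units.val_mul, mul_inv_cancel]
      simp
    have := ha ((↑(a⁻¹) : Matrix ι ι F) *ᵥ v)
    rw [key] at this
    exact this.symm

/-! The `n - 1` vectors `gᵢ v` span a proper subspace, so a nonzero linear form `φ` vanishes on all
of them. The hyperplanes `hⱼ W` and `ker φ` have total codimension at most `n - 1 < n`, so they
share a nonzero vector `w`. The transvection `x ↦ x + φ x • w` is then a nontrivial element fixing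
every `gᵢ v` and preserving every `hⱼ W`. -/

section Codimension

open Module

variable {K V : Type*} [Field K] [AddCommGroup V] [Module K V]

theorem LinearMap.finrank_quotient_ker_le_one (f : V →ₗ[K] K) :
    finrank K (V ⧸ LinearMap.ker f) ≤ 1 := by
  rw [f.quotKerEquivRange.finrank_eq]
  exact (Submodule.finrank_le _).trans (finrank_self K).le

variable [FiniteDimensional K V]

theorem Submodule.exists_ne_zero_forall_mem_of_sum_finrank_quotient_lt {ι : Type*} [Fintype ι]
    (W : ι → Submodule K V) (h : ∑ j, finrank K (V ⧸ W j) < finrank K V) :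
    ∃ w ≠ 0, ∀ j, w ∈ W j := by
  let q : V →ₗ[K] (∀ j, V ⧸ W j) := LinearMap.pi fun j => (W j).mkQ
  have hq : LinearMap.ker q ≠ ⊥ := LinearMap.ker_ne_bot_of_finrank_lt (by rwa [finrank_pi_fintype])
  obtain ⟨w, hw, hw0⟩ := Submodule.exists_mem_ne_zero_of_ne_bot hq
  refine ⟨w, hw0, fun j => ?_⟩
  simpa [q, Submodule.Quotient.mk_eq_zero] using congr_fun (LinearMap.mem_ker.mp hw) j

theorem Module.exists_dual_ne_zero_forall_eq_zero {ι : Type*} [Fintype ι] (v : ι → V)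
    (h : Fintype.card ι < finrank K V) :
    ∃ φ : Dual K V, φ ≠ 0 ∧ ∀ i, φ (v i) = 0 := by
  have hsum : ∑ i, finrank K (Dual K V ⧸ LinearMap.ker (Dual.eval K V (v i)))
      < finrank K (Dual K V) := by
    rw [Subspace.dual_finrank_eq]
    calc _ ≤ ∑ _i : ι, 1 := Finset.sum_le_sum fun i _ => LinearMap.finrank_quotient_ker_le_one _
      _ < finrank K V := by simpa using h
  simpa using Submodule.exists_ne_zero_forall_mem_of_sum_finrank_quotient_lt _ hsum

theorem Module.Dual.exists_ne_zero_eq_zero_forall_mem {ι : Type*} [Fintype ι] (φ : Dual K V)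
    (W : ι → Submodule K V) (hW : ∀ j, finrank K (V ⧸ W j) ≤ 1)
    (h : Fintype.card ι + 1 < finrank K V) :
    ∃ w ≠ 0, φ w = 0 ∧ ∀ j, w ∈ W j := by
  let U : Option ι → Submodule K V := fun j => j.elim (LinearMap.ker φ) W
  have hsum : ∑ j, finrank K (V ⧸ U j) < finrank K V := by
    rw [Fintype.sum_option]
    calc _ ≤ 1 + ∑ _j : ι, 1 :=
          add_le_add φ.finrank_quotient_ker_le_one (Finset.sum_le_sum fun j _ => hW j)
      _ < finrank K V := by simpa [add_comm] using h
  obtain ⟨w, hw0, hw⟩ := Submodule.exists_ne_zero_forall_mem_of_sum_finrank_quotient_lt U hsum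
  exact ⟨w, hw0, hw none, fun j => hw (some j)⟩

end Codimension

section GeneralLinearGroup

open Module

variable {ι R : Type*} [Fintype ι] [DecidableEq ι] [CommRing R]

theorem Matrix.GeneralLinearGroup.inv_mulVec_mulVec (g : GL ι R) (x : ι → R) :
    (↑g⁻¹ : Matrix ι ι R) *ᵥ ((g : Matrix ι ι R) *ᵥ x) = x := by
  rw [mulVec_mulVec, ← Units.val_mul, inv_mul_cancel, Units.val_one, one_mulVec]

theorem Matrix.GeneralLinearGroup.mulVec_inv_mulVec (g : GL ι R) (x : ι → R) :
    (g : Matrix ι ι R) *ᵥ ((↑g⁻¹ : Matrix ι ι R) *ᵥ x) = x := by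
  rw [mulVec_mulVec, ← Units.val_mul, mul_inv_cancel, Units.val_one, one_mulVec]

theorem conjSub_glVecStab (g : GL ι R) (v : ι → R) :
    conjSub g (glVecStab v) = glVecStab ((g : Matrix ι ι R) *ᵥ v) := by
  ext t
  rw [conjSub, Subgroup.mem_map_equiv, MulAut.conj_symm_apply]
  change (↑(g⁻¹ * t * g) : Matrix ι ι R) *ᵥ v = v ↔ (t : Matrix ι ι R) *ᵥ (↑g *ᵥ v) = ↑g *ᵥ v
  rw [Units.val_mul, Units.val_mul, ← mulVec_mulVec, ← mulVec_mulVec]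
  constructor
  · intro h
    simpa only [GeneralLinearGroup.mulVec_inv_mulVec] using congrArg ((g : Matrix ι ι R) *ᵥ ·) h
  · intro h
    rw [h, GeneralLinearGroup.inv_mulVec_mulVec]

theorem conjSub_glSubspaceStab (g : GL ι R) (W : Submodule R (ι → R)) :
    conjSub g (glSubspaceStab W) =
      glSubspaceStab (W.map (GeneralLinearGroup.toLin g).toLinearEquiv.toLinearMap) := by
  ext t
  rw [conjSub, Subgroup.mem_map_equiv, MulAut.conj_symm_apply]
  change (∀ x, x ∈ W ↔ (↑(g⁻¹ * t * g) : Matrix ι ι R) *ᵥ x ∈ W) ↔ ∀ y, _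
  simp only [Submodule.mem_map_equiv]
  conv_rhs => rw [(GeneralLinearGroup.toLin g).toLinearEquiv.surjective.forall]
  simp only [Units.val_mul, ← mulVec_mulVec, LinearEquiv.symm_apply_apply]
  rfl

def transvectionGL {φ : Dual R (ι → R)} {w : ι → R} (h : φ w = 0) : GL ι R :=
  GeneralLinearGroup.toLin.symm
    ((LinearMap.GeneralLinearGroup.generalLinearEquiv R _).symm (LinearEquiv.transvection h))

theorem transvectionGL_mulVec {φ : Dual R (ι → R)} {w : ι → R} (h : φ w = 0) (x : ι → R) :
    (transvectionGL h : Matrix ι ι R) *ᵥ x = x + φ x • w := by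
  change (GeneralLinearGroup.toLin (transvectionGL h) : (ι → R) → ι → R) x = _
  rw [transvectionGL, MulEquiv.apply_symm_apply]
  rfl

theorem transvectionGL_mem_glVecStab {φ : Dual R (ι → R)} {w u : ι → R} (h : φ w = 0)
    (hu : φ u = 0) : transvectionGL h ∈ glVecStab u := by
  change _ *ᵥ u = u
  rw [transvectionGL_mulVec, hu, zero_smul, add_zero]

theorem transvectionGL_mem_glSubspaceStab {φ : Dual R (ι → R)} {w : ι → R} (h : φ w = 0)
    {W : Submodule R (ι → R)} (hw : w ∈ W) : transvectionGL h ∈ glSubspaceStab W := by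
  intro x
  rw [transvectionGL_mulVec, W.add_mem_iff_left (W.smul_mem _ hw)]

theorem transvectionGL_ne_one [IsDomain R] {φ : Dual R (ι → R)} {w : ι → R} (h : φ w = 0)
    (hφ : φ ≠ 0) (hw : w ≠ 0) : transvectionGL h ≠ 1 := by
  intro h1
  obtain ⟨x, hx⟩ := DFunLike.ne_iff.mp hφ
  have := transvectionGL_mulVec h x
  simp only [h1, GeneralLinearGroup.coe_one, one_mulVec, left_eq_add, smul_eq_zero, hw,
    or_false] at this
  exact hx this

end GeneralLinearGroup

theorem gln2_tuple_nonregular_general (n : ℕ) (hn : 5 ≤ n)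
    (v : Fin n → ZMod 2)
    (W : Submodule (ZMod 2) (Fin n → ZMod 2))
    (hW : Module.finrank (ZMod 2) ↥W = n - 1) :
    ∀ (g : Fin (n - 1) → Matrix.GeneralLinearGroup (Fin n) (ZMod 2))
      (h : Fin (n - 2) → Matrix.GeneralLinearGroup (Fin n) (ZMod 2)),
      (⨅ i, conjSub (g i) (glVecStab v)) ⊓
        (⨅ j, conjSub (h j) (glSubspaceStab W)) ≠ ⊥ := by
  intro g h
  have hV : Module.finrank (ZMod 2) (Fin n → ZMod 2) = n := Module.finrank_fin_fun _
  obtain ⟨φ, hφ0, hφ⟩ := Module.exists_dual_ne_zero_forall_eq_zero (K := ZMod 2)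
    (fun i => (g i : Matrix (Fin n) (Fin n) (ZMod 2)) *ᵥ v)
    (by simp only [Fintype.card_fin, hV]; omega)
  have hcodim : ∀ j, Module.finrank (ZMod 2) ((Fin n → ZMod 2) ⧸
      W.map (GeneralLinearGroup.toLin (h j)).toLinearEquiv.toLinearMap) ≤ 1 := fun j => by
    rw [← (Submodule.Quotient.equiv W _ _ rfl).finrank_eq]
    have := W.finrank_quotient_add_finrank
    omega
  obtain ⟨w, hw0, hφw, hw⟩ := φ.exists_ne_zero_eq_zero_forall_mem _ hcodim
    (by simp only [Fintype.card_fin, hV]; omega)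
  intro hbot
  apply transvectionGL_ne_one hφw hφ0 hw0
  rw [← Subgroup.mem_bot, ← hbot]
  simp only [Subgroup.mem_inf, Subgroup.mem_iInf, conjSub_glVecStab, conjSub_glSubspaceStab]
  exact ⟨fun i => transvectionGL_mem_glVecStab hφw (hφ i),
    fun j => transvectionGL_mem_glSubspaceStab hφw (hw j)⟩

theorem gln2_tuple_nonregular (n : ℕ) (hn : 5 ≤ n)
    (v : Fin n → ZMod 2) (hv : v ≠ 0)
    (W : Submodule (ZMod 2) (Fin n → ZMod 2))
    (hW : Module.finrank (ZMod 2) ↥W = n - 1) :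
    ∀ (g : Fin (n - 1) → Matrix.GeneralLinearGroup (Fin n) (ZMod 2))
      (h : Fin (n - 2) → Matrix.GeneralLinearGroup (Fin n) (ZMod 2)),
      (⨅ i, conjSub (g i) (glVecStab v)) ⊓
        (⨅ j, conjSub (h j) (glSubspaceStab W)) ≠ ⊥ :=
  gln2_tuple_nonregular_general n hn v W hW
end

section
/- Let n ≥ 5, and for i = 1, …, n-2 let A_i be a subset of [n] with 1 ≤ |A_i| ≤ n/2, and let H_i = {g ∈ S_n : g(A_i) = A_i} be the setwise stabilizer of A_i in S_n. Then the tuple (H_1, …, H_{n-2}) is non-regular (i.e. for all g_1, …, g_{n-2} ∈ S_n the intersection ⋂_{i=1}^{n-2} g_i H_i g_i^{-1} is nontrivial) if and only if at least n-3 of the sets A_1, …, A_{n-2} are singletons. -/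
/-- The setwise stabilizer in `Sym(Fin n)` of a subset `A ⊆ Fin n`. -/
def setStab {n : ℕ} (A : Set (Fin n)) : Subgroup (Equiv.Perm (Fin n)) where
  carrier := {g | ⇑g '' A = A}
  one_mem' := by simp
  mul_mem' := by
    intro a b ha hb
    show ⇑(a * b) '' A = A
    rw [Equiv.Perm.coe_mul, Set.image_comp]
    rw [Set.mem_setOf_eq] at ha hb
    rw [hb, ha]
  inv_mem' := by
    intro a ha
    rw [Set.mem_setOf_eq] at ha ⊢
    conv_lhs => rw [← ha]
    simp [Set.image_image]

lemma mem_setStab {n : ℕ} {A : Set (Fin n)} {g : Equiv.Perm (Fin n)} :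
    g ∈ setStab A ↔ ⇑g '' A = A := Iff.rfl

lemma conjSub_setStab {n : ℕ} (g : Equiv.Perm (Fin n)) (A : Set (Fin n)) :
    conjSub g (setStab A) = setStab (⇑g '' A) := by
  ext h
  constructor
  · rintro ⟨k, hk, rfl⟩
    show ⇑(g * k * g⁻¹) '' (⇑g '' A) = ⇑g '' A
    replace hk : ⇑k '' A = A := hk
    have h2 : ⇑(g * k * g⁻¹) '' (⇑g '' A) = ⇑g '' (⇑k '' A) := by
      rw [← Set.image_comp, ← Set.image_comp]
      congr 1
      funext x; simp [Equiv.Perm.mul_apply]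
    rw [h2, hk]
  · intro hh
    rw [mem_setStab] at hh
    refine ⟨g⁻¹ * h * g, ?_, ?_⟩
    · show ⇑(g⁻¹ * h * g) '' A = A
      have : ⇑(g⁻¹ * h * g) '' A = ⇑g⁻¹ '' (⇑h '' (⇑g '' A)) := by
        rw [← Set.image_comp, ← Set.image_comp]; rfl
      rw [this, hh, ← Set.image_comp]
      simp
    · show g * (g⁻¹ * h * g) * g⁻¹ = h
      group

lemma swap_image_of_iff {n : ℕ} {x y : Fin n} {B : Set (Fin n)}
    (h : x ∈ B ↔ y ∈ B) : ⇑(Equiv.swap x y) '' B = B := by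
  ext z
  rw [Set.mem_image]
  constructor
  · rintro ⟨w, hw, rfl⟩
    rcases eq_or_ne w x with rfl | hwx
    · rwa [Equiv.swap_apply_left, ← h]
    rcases eq_or_ne w y with rfl | hwy
    · rwa [Equiv.swap_apply_right, h]
    · rwa [Equiv.swap_apply_of_ne_of_ne hwx hwy]
  · intro hz
    rcases eq_or_ne z x with rfl | hzx
    · exact ⟨y, h.mp hz, Equiv.swap_apply_right _ _⟩
    rcases eq_or_ne z y with rfl | hzy
    · exact ⟨x, h.mpr hz, Equiv.swap_apply_left _ _⟩
    · exact ⟨z, hz, Equiv.swap_apply_of_ne_of_ne hzx hzy⟩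

lemma exists_perm_image_of_ncard_eq {n : ℕ} (s t : Set (Fin n))
    (h : s.ncard = t.ncard) : ∃ g : Equiv.Perm (Fin n), ⇑g '' s = t := by
  classical
  have hs : Fintype.card s = Fintype.card t := by
    rwa [Set.ncard_eq_toFinset_card', Set.ncard_eq_toFinset_card',
      Set.toFinset_card, Set.toFinset_card] at h
  have hsc : Fintype.card (↥sᶜ) = Fintype.card (↥tᶜ) := by
    have := Fintype.card_compl_set s
    have := Fintype.card_compl_set t
    omega
  obtain ⟨e⟩ := Fintype.card_eq.mp hs
  obtain ⟨e'⟩ := Fintype.card_eq.mp hsc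
  refine ⟨((Equiv.Set.sumCompl s).symm.trans ((e.sumCongr e').trans
    (Equiv.Set.sumCompl t))), ?_⟩
  ext z
  simp only [Set.mem_image]
  constructor
  · rintro ⟨w, hw, rfl⟩
    simp [Equiv.Set.sumCompl_symm_apply_of_mem hw]
  · intro hz
    refine ⟨e.symm ⟨z, hz⟩, (e.symm ⟨z, hz⟩).2, ?_⟩
    simp [Equiv.Set.sumCompl_symm_apply_of_mem (e.symm ⟨z, hz⟩).2]


lemma backward_lemma (n : ℕ) (hn : 5 ≤ n) (B : Fin (n - 2) → Set (Fin n))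
    (hcount : n - 3 ≤ Set.ncard {i : Fin (n - 2) | (B i).ncard = 1}) :
    ∃ h : Equiv.Perm (Fin n), h ≠ 1 ∧ ∀ i, ⇑h '' B i = B i := by
  classical
  set J : Finset (Fin (n - 2)) := Finset.univ.filter (fun i => (B i).ncard = 1) with hJdef
  have hJcard : n - 3 ≤ J.card := by
    have h1 : {i : Fin (n - 2) | (B i).ncard = 1}.ncard = J.card := by
      rw [Set.ncard_eq_toFinset_card']
      congr 1
      ext i; simp [hJdef]
    exact h1 ▸ hcount
  have hb : ∀ i ∈ J, ∃ b : Fin n, B i = {b} := by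
    intro i hi
    rw [hJdef, Finset.mem_filter] at hi
    exact Set.ncard_eq_one.mp hi.2
  haveI : Nonempty (Fin n) := ⟨⟨0, by omega⟩⟩
  choose! b hbspec using hb
  set T : Finset (Fin n) := J.image b with hTdef
  have hTcard : T.card ≤ J.card := Finset.card_image_le
  have hJle : J.card ≤ n - 2 := by
    have := Finset.card_le_univ J
    simpa using this
  -- key: find x ≠ y outside T with (x ∈ D ↔ y ∈ D) for suitable D
  have main : ∀ D : Set (Fin n),
      (∀ i, i ∉ J → B i = D) → (∃ x y : Fin n, x ≠ y ∧ x ∉ T ∧ y ∉ T ∧ (x ∈ D ↔ y ∈ D)) →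
      ∃ h : Equiv.Perm (Fin n), h ≠ 1 ∧ ∀ i, ⇑h '' B i = B i := by
    intro D hD ⟨x, y, hxy, hxT, hyT, hiff⟩
    refine ⟨Equiv.swap x y, ?_, ?_⟩
    · simp [Equiv.swap_eq_one_iff, hxy]
    · intro i
      by_cases hi : i ∈ J
      · rw [hbspec i hi]
        apply swap_image_of_iff
        have hxb : x ≠ b i := fun hx => hxT (hx ▸ Finset.mem_image_of_mem b hi)
        have hyb : y ≠ b i := fun hy => hyT (hy ▸ Finset.mem_image_of_mem b hi)
        simp [Set.mem_singleton_iff, hxb, hyb]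
      · rw [hD i hi]
        exact swap_image_of_iff hiff
  by_cases hall : ∀ i, i ∈ J
  · -- all singletons
    have hcompl : 2 ≤ (Finset.univ \ T).card := by
      rw [Finset.card_sdiff_of_subset (Finset.subset_univ T)]
      have : (Finset.univ : Finset (Fin n)).card = n := by simp
      omega
    obtain ⟨x, hx, y, hy, hxy⟩ := Finset.one_lt_card.mp hcompl
    rw [Finset.mem_sdiff] at hx hy
    exact main ∅ (fun i hi => absurd (hall i) hi) ⟨x, y, hxy, hx.2, hy.2, Iff.rfl⟩
  · push_neg at hall
    obtain ⟨j₀, hj₀⟩ := hall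
    have hJsub : J ⊆ Finset.univ.erase j₀ := by
      intro i hi
      rw [Finset.mem_erase]
      exact ⟨fun h => hj₀ (h ▸ hi), Finset.mem_univ i⟩
    have hJ3 : J.card ≤ n - 3 := by
      have := Finset.card_le_card hJsub
      rw [Finset.card_erase_of_mem (Finset.mem_univ j₀)] at this
      have huniv : (Finset.univ : Finset (Fin (n - 2))).card = n - 2 := by simp
      omega
    have hother : ∀ i, i ∉ J → B i = B j₀ := by
      intro i hi
      by_contra hne
      rcases eq_or_ne i j₀ with rfl | hij
      · exact hne rfl
      · -- two indices outside J: contradiction with card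
        have hsub2 : J ⊆ (Finset.univ.erase j₀).erase i := by
          intro k hk
          rw [Finset.mem_erase, Finset.mem_erase]
          exact ⟨fun h => hi (h ▸ hk), fun h => hj₀ (h ▸ hk), Finset.mem_univ k⟩
        have := Finset.card_le_card hsub2
        rw [Finset.card_erase_of_mem, Finset.card_erase_of_mem (Finset.mem_univ j₀)] at this
        · have huniv : (Finset.univ : Finset (Fin (n - 2))).card = n - 2 := by simp
          omega
        · rw [Finset.mem_erase]; exact ⟨hij, Finset.mem_univ i⟩
    -- complement of T has ≥ 3 elements
    have hS : 3 ≤ (Finset.univ \ T).card := by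
      rw [Finset.card_sdiff_of_subset (Finset.subset_univ T)]
      have : (Finset.univ : Finset (Fin n)).card = n := by simp
      omega
    set S := Finset.univ \ T with hSdef
    set D := B j₀ with hDdef
    have hsplit : 2 ≤ (S.filter (fun z => z ∈ D)).card ∨
        2 ≤ (S.filter (fun z => z ∉ D)).card := by
      have := Finset.card_filter_add_card_filter_not
        (s := S) (p := fun z => z ∈ D)
      omega
    rcases hsplit with h2 | h2
    · obtain ⟨x, hx, y, hy, hxy⟩ := Finset.one_lt_card.mp h2
      rw [Finset.mem_filter, hSdef, Finset.mem_sdiff] at hx hy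
      exact main D hother ⟨x, y, hxy, hx.1.2, hy.1.2, by simp [hx.2, hy.2]⟩
    · obtain ⟨x, hx, y, hy, hxy⟩ := Finset.one_lt_card.mp h2
      rw [Finset.mem_filter, hSdef, Finset.mem_sdiff] at hx hy
      exact main D hother ⟨x, y, hxy, hx.1.2, hy.1.2, by simp [hx.2, hy.2]⟩


def goodFamily (m : ℕ) (s : Fin m → ℕ) (B : Fin m → Finset ℕ) : Prop :=
  (∀ i, (B i).card = s i) ∧ (∀ i, B i ⊆ Finset.range (m + 1)) ∧
  (∀ x, x < m + 1 → ∃ i, x ∈ B i) ∧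
  (∀ x y, x < y → y < m + 1 → ∃ i, ¬(x ∈ B i ↔ y ∈ B i))

def caseOneB (a b v : ℕ) : Finset ℕ :=
  if v = 0 then Finset.range a else if v = 1 then Finset.Icc (a - 1) (a + b - 2)
  else {if v ≤ a - 1 then v - 1 else v + 1}

lemma caseOneB_mem (a b v z : ℕ) :
    z ∈ caseOneB a b v ↔ (v = 0 ∧ z < a) ∨ (v = 1 ∧ a - 1 ≤ z ∧ z ≤ a + b - 2) ∨
      (2 ≤ v ∧ ((v ≤ a - 1 ∧ z = v - 1) ∨ (a - 1 < v ∧ z = v + 1))) := by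
  unfold caseOneB
  split_ifs with h0 h1 h2 <;>
    simp [Finset.mem_range, Finset.mem_Icc, Finset.mem_singleton] <;> omega

lemma caseOneB_card (a b v : ℕ) (ha : 2 ≤ a) (hb : 2 ≤ b) (hab : b ≤ a) :
    (caseOneB a b v).card = if v = 0 then a else if v = 1 then b else 1 := by
  unfold caseOneB
  split_ifs with h0 h1 <;> simp [Nat.card_Icc] <;> omega

lemma case_one (m : ℕ) (hm : 2 ≤ m) (s : Fin m → ℕ) (hanti : Antitone s)
    (h1 : ∀ i, 1 ≤ s i)
    (hb2 : 2 ≤ s ⟨1, by omega⟩)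
    (hbound : 2 * s ⟨0, by omega⟩ ≤ m + 2)
    (hsingle : ∀ i : Fin m, 2 ≤ i.val → s i = 1) :
    ∃ B, goodFamily m s B := by
  classical
  obtain ⟨a, hadef⟩ : ∃ a, s ⟨0, by omega⟩ = a := ⟨_, rfl⟩
  obtain ⟨b, hbdef⟩ : ∃ b, s ⟨1, by omega⟩ = b := ⟨_, rfl⟩
  have hab : b ≤ a := by
    rw [← hadef, ← hbdef]
    exact hanti (by simp [Fin.le_def])
  have ha : 2 ≤ a := by omega
  have hb : 2 ≤ b := by rw [← hbdef]; exact hb2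
  rw [hadef] at hbound
  have ham : a ≤ m := by omega
  refine ⟨fun i => caseOneB a b i.val, ?_, ?_, ?_, ?_⟩
  · intro i
    rw [caseOneB_card a b i.val ha hb hab]
    by_cases h0 : i.val = 0
    · rw [if_pos h0, ← hadef]; congr 1; exact Fin.ext h0.symm
    by_cases hone : i.val = 1
    · rw [if_neg h0, if_pos hone, ← hbdef]; congr 1; exact Fin.ext hone.symm
    · rw [if_neg h0, if_neg hone]; exact (hsingle i (by omega)).symm
  · intro i z hz
    rw [caseOneB_mem] at hz
    have him : i.val < m := i.isLt
    rw [Finset.mem_range]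
    omega
  · intro z hz
    by_cases hz0 : z = 0 ∨ z = a - 1
    · refine ⟨⟨0, by omega⟩, ?_⟩
      show z ∈ caseOneB a b 0
      rw [caseOneB_mem]
      exact Or.inl ⟨rfl, by omega⟩
    by_cases hza : z = a
    · refine ⟨⟨1, by omega⟩, ?_⟩
      show z ∈ caseOneB a b 1
      rw [caseOneB_mem]
      exact Or.inr (Or.inl ⟨rfl, by omega, by omega⟩)
    push_neg at hz0
    by_cases hzs : z ≤ a - 2
    · refine ⟨⟨z + 1, by omega⟩, ?_⟩
      show z ∈ caseOneB a b (z + 1)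
      rw [caseOneB_mem]
      exact Or.inr (Or.inr ⟨by omega, Or.inl ⟨by omega, by omega⟩⟩)
    · refine ⟨⟨z - 1, by omega⟩, ?_⟩
      show z ∈ caseOneB a b (z - 1)
      rw [caseOneB_mem]
      exact Or.inr (Or.inr ⟨by omega, Or.inr ⟨by omega, by omega⟩⟩)
  · intro x y hxy hy
    by_cases cy : y ≠ 0 ∧ y ≠ a - 1 ∧ y ≠ a
    · obtain ⟨cy0, cy1, cy2⟩ := cy
      by_cases hzs : y ≤ a - 2
      · refine ⟨⟨y + 1, by omega⟩, fun hiff => ?_⟩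
        replace hiff : x ∈ caseOneB a b (y + 1) ↔ y ∈ caseOneB a b (y + 1) := hiff
        have hy' : y ∈ caseOneB a b (y + 1) := by
          rw [caseOneB_mem]; right; right; exact ⟨by omega, Or.inl ⟨by omega, by omega⟩⟩
        have hx' := hiff.mpr hy'
        rw [caseOneB_mem] at hx'
        omega
      · refine ⟨⟨y - 1, by omega⟩, fun hiff => ?_⟩
        replace hiff : x ∈ caseOneB a b (y - 1) ↔ y ∈ caseOneB a b (y - 1) := hiff
        have hy' : y ∈ caseOneB a b (y - 1) := by
          rw [caseOneB_mem]; right; right; exact ⟨by omega, Or.inr ⟨by omega, by omega⟩⟩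
        have hx' := hiff.mpr hy'
        rw [caseOneB_mem] at hx'
        omega
    by_cases cx : x ≠ 0 ∧ x ≠ a - 1 ∧ x ≠ a
    · obtain ⟨cx0, cx1, cx2⟩ := cx
      by_cases hzs : x ≤ a - 2
      · refine ⟨⟨x + 1, by omega⟩, fun hiff => ?_⟩
        replace hiff : x ∈ caseOneB a b (x + 1) ↔ y ∈ caseOneB a b (x + 1) := hiff
        have hx' : x ∈ caseOneB a b (x + 1) := by
          rw [caseOneB_mem]; right; right; exact ⟨by omega, Or.inl ⟨by omega, by omega⟩⟩
        have hy' := hiff.mp hx'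
        rw [caseOneB_mem] at hy'
        omega
      · refine ⟨⟨x - 1, by omega⟩, fun hiff => ?_⟩
        replace hiff : x ∈ caseOneB a b (x - 1) ↔ y ∈ caseOneB a b (x - 1) := hiff
        have hx' : x ∈ caseOneB a b (x - 1) := by
          rw [caseOneB_mem]; right; right; exact ⟨by omega, Or.inr ⟨by omega, by omega⟩⟩
        have hy' := hiff.mp hx'
        rw [caseOneB_mem] at hy'
        omega
    · -- both x and y in {0, a-1, a}
      have cx' : x = 0 ∨ x = a - 1 ∨ x = a := by tauto
      have cy' : y = 0 ∨ y = a - 1 ∨ y = a := by tauto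
      clear cx cy
      by_cases hxx : x = 0 ∧ y = a - 1
      · refine ⟨⟨1, by omega⟩, fun hiff => ?_⟩
        replace hiff : x ∈ caseOneB a b 1 ↔ y ∈ caseOneB a b 1 := hiff
        have hy' : y ∈ caseOneB a b 1 := by
          rw [caseOneB_mem]; right; left; exact ⟨rfl, by omega, by omega⟩
        have hx' := hiff.mpr hy'
        rw [caseOneB_mem] at hx'
        omega
      · -- y = a and x ∈ {0, a-1}
        have hya : y = a := by omega
        refine ⟨⟨0, by omega⟩, fun hiff => ?_⟩
        replace hiff : x ∈ caseOneB a b 0 ↔ y ∈ caseOneB a b 0 := hiff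
        have hx' : x ∈ caseOneB a b 0 := by
          rw [caseOneB_mem]; left; exact ⟨rfl, by omega⟩
        have hy' := hiff.mp hx'
        rw [caseOneB_mem] at hy'
        omega


lemma goodFamily_comp_equiv (m : ℕ) (s : Fin m → ℕ) (B : Fin m → Finset ℕ)
    (e : Fin m ≃ Fin m) (h : goodFamily m s B) : goodFamily m (s ∘ e) (B ∘ e) := by
  obtain ⟨h1, h2, h3, h4⟩ := h
  refine ⟨fun i => h1 (e i), fun i => h2 (e i), ?_, ?_⟩
  · intro x hx
    obtain ⟨i, hi⟩ := h3 x hx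
    exact ⟨e.symm i, by simpa using hi⟩
  · intro x y hxy hy
    obtain ⟨i, hi⟩ := h4 x y hxy hy
    exact ⟨e.symm i, by simpa using hi⟩

lemma extend_snoc (m' : ℕ) (s' : Fin m' → ℕ) (B' : Fin m' → Finset ℕ)
    (hgood : goodFamily m' s' B') (σ : ℕ) (hσ1 : 1 ≤ σ) (hσ2 : σ ≤ m' + 2) :
    ∃ B, goodFamily (m' + 1) (Fin.snoc s' σ) B := by
  classical
  obtain ⟨h1, h2, h3, h4⟩ := hgood
  refine ⟨Fin.snoc B' (Finset.Icc (m' + 2 - σ) (m' + 1)), ?_, ?_, ?_, ?_⟩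
  · intro i
    refine Fin.lastCases ?_ ?_ i
    · simp only [Fin.snoc_last]
      rw [Nat.card_Icc]
      omega
    · intro j
      simp only [Fin.snoc_castSucc]
      exact h1 j
  · intro i
    refine Fin.lastCases ?_ ?_ i
    · simp only [Fin.snoc_last]
      intro z hz
      rw [Finset.mem_Icc] at hz
      rw [Finset.mem_range]
      omega
    · intro j
      simp only [Fin.snoc_castSucc]
      intro z hz
      have := h2 j hz
      rw [Finset.mem_range] at this ⊢
      omega
  · intro x hx
    rcases Nat.lt_or_ge x (m' + 1) with h | h
    · obtain ⟨i, hi⟩ := h3 x h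
      exact ⟨i.castSucc, by simpa using hi⟩
    · refine ⟨Fin.last m', ?_⟩
      simp only [Fin.snoc_last, Finset.mem_Icc]
      omega
  · intro x y hxy hy
    rcases Nat.lt_or_ge y (m' + 1) with h | h
    · obtain ⟨i, hi⟩ := h4 x y hxy h
      exact ⟨i.castSucc, by simpa using hi⟩
    · have hy' : y = m' + 1 := by omega
      rcases Nat.lt_or_ge x (m' + 2 - σ) with hc | hc
      · refine ⟨Fin.last m', ?_⟩
        simp only [Fin.snoc_last, Finset.mem_Icc]
        intro hiff
        have := hiff.mpr (by omega)
        omega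
      · obtain ⟨i, hi⟩ := h3 x (by omega)
        refine ⟨i.castSucc, ?_⟩
        simp only [Fin.snoc_castSucc]
        intro hiff
        have := h2 i (hiff.mp hi)
        rw [Finset.mem_range] at this
        omega


set_option maxHeartbeats 1000000 in
lemma case_three_b (m : ℕ) (hm : 2 ≤ m) (s : Fin m → ℕ) (hanti : Antitone s)
    (h1 : ∀ i, 1 ≤ s i)
    (hb2 : 2 ≤ s ⟨1, by omega⟩)
    (heq : 2 * s ⟨0, by omega⟩ = m + 2)
    (hs01 : s ⟨1, by omega⟩ = s ⟨0, by omega⟩) :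
    ∃ B, goodFamily m s B := by
  classical
  -- c ≥ 1 with s₀ = c + 1, m = 2c
  obtain ⟨c, hc1, hsc⟩ : ∃ c, 1 ≤ c ∧ s ⟨0, by omega⟩ = c + 1 := by
    refine ⟨s ⟨0, by omega⟩ - 1, by omega, by omega⟩
  have hmc : m = 2 * c := by omega
  have hsmax : ∀ i : Fin m, s i ≤ c + 1 := by
    intro i
    rw [← hsc]
    exact hanti (by simp [Fin.le_def])
  -- p := first index where size drops below c+1 (or m)
  have hD : ∃ k, ∀ h : k < m, s ⟨k, h⟩ ≤ c := ⟨m, fun h => absurd h (lt_irrefl m)⟩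
  set p := Nat.find hD with hpdef
  have hpm : p ≤ m := Nat.find_le (fun h => absurd h (lt_irrefl m))
  have hstop : ∀ i : Fin m, i.val < p → s i = c + 1 := by
    intro i hi
    have := Nat.find_min hD hi
    push_neg at this
    obtain ⟨hh, hgt⟩ := this
    have : c + 1 ≤ s ⟨i.val, hh⟩ := by omega
    have hieq : (⟨i.val, hh⟩ : Fin m) = i := Fin.ext rfl
    rw [hieq] at this
    have := hsmax i
    omega
  have hslow : ∀ i : Fin m, p ≤ i.val → s i ≤ c := by
    intro i hi
    have hplt : p < m := lt_of_le_of_lt hi i.isLt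
    have hfind := Nat.find_spec hD hplt
    calc s i ≤ s ⟨p, hplt⟩ := hanti (by simp [Fin.le_def, hi])
    _ ≤ c := hfind
  have hp2 : 2 ≤ p := by
    by_contra h
    push_neg at h
    have h2 := hslow ⟨1, by omega⟩ (show p ≤ 1 by omega)
    rw [hs01, hsc] at h2
    omega
  set q := min p (c + 1) with hqdef
  have hq2 : 2 ≤ q := by omega
  refine ⟨fun i => Finset.Icc
      (if i.val < q then i.val else if i.val ≤ c then i.val
        else if i.val ≤ 2 * c + 1 - p then i.val + p - s i else 0)
      (if i.val < q then i.val + c else if i.val ≤ c then i.val + (s i - 1)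
        else if i.val ≤ 2 * c + 1 - p then i.val + p - 1 else s i - 1), ?_, ?_, ?_, ?_⟩
  · -- cards
    intro i
    have hiv := i.isLt
    rw [Nat.card_Icc]
    by_cases b1 : i.val < q
    · have hs := hstop i (by omega)
      rw [if_pos b1, if_pos b1]
      omega
    by_cases b2 : i.val ≤ c
    · rw [if_neg b1, if_neg b1, if_pos b2, if_pos b2]
      have := h1 i
      omega
    by_cases b3 : i.val ≤ 2 * c + 1 - p
    · have hsl : s i ≤ c := hslow i (by omega)
      have := h1 i
      rw [if_neg b1, if_neg b1, if_neg b2, if_neg b2, if_pos b3, if_pos b3]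
      omega
    · have := h1 i
      rw [if_neg b1, if_neg b1, if_neg b2, if_neg b2, if_neg b3, if_neg b3]
      omega
  · -- subset of range
    intro i z hz
    rw [Finset.mem_Icc] at hz
    rw [Finset.mem_range]
    have hiv := i.isLt
    have hsm := hsmax i
    have hs1 := h1 i
    by_cases b1 : i.val < q
    · rw [if_pos b1, if_pos b1] at hz; omega
    by_cases b2 : i.val ≤ c
    · rw [if_neg b1, if_neg b1, if_pos b2, if_pos b2] at hz; omega
    by_cases b3 : i.val ≤ 2 * c + 1 - p
    · rw [if_neg b1, if_neg b1, if_neg b2, if_neg b2, if_pos b3, if_pos b3] at hz; omega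
    · rw [if_neg b1, if_neg b1, if_neg b2, if_neg b2, if_neg b3, if_neg b3] at hz; omega
  · -- nonempty
    intro z hz
    by_cases hzc : z ≤ c
    · have hvm : (0 : ℕ) < m := by omega
      refine ⟨⟨0, hvm⟩, ?_⟩
      simp only [Finset.mem_Icc, Fin.val_mk]
      have := h1 ⟨0, hvm⟩
      split_ifs <;> omega
    by_cases hzs : z ≤ q + c - 1
    · have hvm : z - c < m := by omega
      refine ⟨⟨z - c, hvm⟩, ?_⟩
      simp only [Finset.mem_Icc, Fin.val_mk]
      have := h1 ⟨z - c, hvm⟩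
      split_ifs <;> omega
    · -- tail : implies q = p
      have hqp : q = p := by omega
      have hvm : z + 1 - p < m := by omega
      refine ⟨⟨z + 1 - p, hvm⟩, ?_⟩
      have hsl : s ⟨z + 1 - p, hvm⟩ ≤ c := hslow _ (by simp only [Fin.val_mk]; omega)
      have hs1 := h1 ⟨z + 1 - p, hvm⟩
      simp only [Finset.mem_Icc, Fin.val_mk]
      split_ifs <;> omega
  · -- separation
    intro x y hxy hy
    by_cases hyc : y ≤ c
    · have hvm : y < m := by omega
      refine ⟨⟨y, hvm⟩, ?_⟩
      simp only [Finset.mem_Icc, Fin.val_mk]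
      have := h1 ⟨y, hvm⟩
      have hsm := hsmax ⟨y, hvm⟩
      split_ifs <;> omega
    by_cases hys : y ≤ q + c - 1
    · by_cases hxlow : x < y - c
      · have hvm : y - c < m := by omega
        refine ⟨⟨y - c, hvm⟩, ?_⟩
        simp only [Finset.mem_Icc, Fin.val_mk]
        have := h1 ⟨y - c, hvm⟩
        split_ifs <;> omega
      · have hvm : y - c - 1 < m := by omega
        refine ⟨⟨y - c - 1, hvm⟩, ?_⟩
        simp only [Finset.mem_Icc, Fin.val_mk]
        have := h1 ⟨y - c - 1, hvm⟩
        split_ifs <;> omega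
    · -- y in the tail; q = p
      have hqp : q = p := by omega
      have hjm : y + 1 - p < m := by omega
      have hsj1 := h1 ⟨y + 1 - p, hjm⟩
      have hsjc : s ⟨y + 1 - p, hjm⟩ ≤ c := hslow _ (by simp only [Fin.val_mk]; omega)
      by_cases hxE : y + 1 - s ⟨y + 1 - p, hjm⟩ ≤ x
      · -- x is inside the ender of y; separate x instead
        by_cases hx1 : p + c ≤ x
        · have hvm : x + 1 - p < m := by omega
          refine ⟨⟨x + 1 - p, hvm⟩, ?_⟩
          have hs1 := h1 ⟨x + 1 - p, hvm⟩
          have hsl : s ⟨x + 1 - p, hvm⟩ ≤ c := hslow _ (by simp only [Fin.val_mk]; omega)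
          simp only [Finset.mem_Icc, Fin.val_mk]
          split_ifs <;> omega
        by_cases hx2 : c < x
        · have hvm : x - c < m := by omega
          refine ⟨⟨x - c, hvm⟩, ?_⟩
          have hs1 := h1 ⟨x - c, hvm⟩
          simp only [Finset.mem_Icc, Fin.val_mk]
          split_ifs <;> omega
        · -- p + 1 ≤ x ≤ c : use stair p - 1
          have hvm : p - 1 < m := by omega
          refine ⟨⟨p - 1, hvm⟩, ?_⟩
          have hs1 := h1 ⟨p - 1, hvm⟩
          simp only [Finset.mem_Icc, Fin.val_mk]
          split_ifs <;> omega
      · refine ⟨⟨y + 1 - p, hjm⟩, ?_⟩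
        simp only [Finset.mem_Icc, Fin.val_mk]
        split_ifs <;> omega


lemma extend_cons (m' : ℕ) (s' : Fin m' → ℕ) (B' : Fin m' → Finset ℕ)
    (hgood : goodFamily m' s' B') (σ : ℕ) (hσ1 : 1 ≤ σ) (hσ2 : σ ≤ m' + 2) :
    ∃ B, goodFamily (m' + 1) (Fin.cons σ s') B := by
  classical
  obtain ⟨h1, h2, h3, h4⟩ := hgood
  refine ⟨Fin.cons (Finset.Icc (m' + 2 - σ) (m' + 1)) B', ?_, ?_, ?_, ?_⟩
  · intro i
    refine Fin.cases ?_ ?_ i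
    · simp only [Fin.cons_zero]
      rw [Nat.card_Icc]
      omega
    · intro j
      simp only [Fin.cons_succ]
      exact h1 j
  · intro i
    refine Fin.cases ?_ ?_ i
    · simp only [Fin.cons_zero]
      intro z hz
      rw [Finset.mem_Icc] at hz
      rw [Finset.mem_range]
      omega
    · intro j
      simp only [Fin.cons_succ]
      intro z hz
      have := h2 j hz
      rw [Finset.mem_range] at this ⊢
      omega
  · intro x hx
    rcases Nat.lt_or_ge x (m' + 1) with h | h
    · obtain ⟨i, hi⟩ := h3 x h
      exact ⟨i.succ, by simpa using hi⟩
    · refine ⟨0, ?_⟩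
      simp only [Fin.cons_zero, Finset.mem_Icc]
      omega
  · intro x y hxy hy
    rcases Nat.lt_or_ge y (m' + 1) with h | h
    · obtain ⟨i, hi⟩ := h4 x y hxy h
      exact ⟨i.succ, by simpa using hi⟩
    · have hy' : y = m' + 1 := by omega
      rcases Nat.lt_or_ge x (m' + 2 - σ) with hc | hc
      · refine ⟨0, ?_⟩
        simp only [Fin.cons_zero, Finset.mem_Icc]
        intro hiff
        have := hiff.mpr (by omega)
        omega
      · obtain ⟨i, hi⟩ := h3 x (by omega)
        refine ⟨i.succ, ?_⟩
        simp only [Fin.cons_succ]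
        intro hiff
        have := h2 i (hiff.mp hi)
        rw [Finset.mem_range] at this
        omega


lemma windowLemma : ∀ m : ℕ, ∀ _ : 2 ≤ m, ∀ s : Fin m → ℕ, Antitone s →
    (∀ i, 1 ≤ s i) → (∀ h : 1 < m, 2 ≤ s ⟨1, h⟩) → (∀ h : 0 < m, 2 * s ⟨0, h⟩ ≤ m + 2) →
    ∃ B, goodFamily m s B := by
  intro m
  induction m using Nat.strong_induction_on with
  | _ m IH =>
    intro hm s hanti h1 hb2' hbound'
    have hb2 : 2 ≤ s ⟨1, by omega⟩ := hb2' (by omega)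
    have hbound : 2 * s ⟨0, by omega⟩ ≤ m + 2 := hbound' (by omega)
    clear hb2' hbound'
    by_cases hc1 : ∀ i : Fin m, 2 ≤ i.val → s i ≤ 1
    · exact case_one m hm s hanti h1 hb2 hbound
        (fun i hi => le_antisymm (hc1 i hi) (h1 i))
    push_neg at hc1
    obtain ⟨i2, hi2v, hi2s⟩ := hc1
    have hm3 : 3 ≤ m := by
      have := i2.isLt
      omega
    have hs2 : 2 ≤ s ⟨2, by omega⟩ := by
      calc 2 ≤ s i2 := hi2s
      _ ≤ s ⟨2, by omega⟩ := hanti (by simp only [Fin.le_def]; omega)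
    obtain ⟨m', rfl⟩ : ∃ m', m = m' + 1 := ⟨m - 1, by omega⟩
    by_cases hc2 : 2 * s ⟨0, by omega⟩ ≤ m' + 2
    · -- peel the last (smallest) size
      have hinit : Antitone (Fin.init s) := fun a b hab =>
        hanti (Fin.castSucc_le_castSucc_iff.mpr hab)
      obtain ⟨B', hB'⟩ := IH m' (by omega) (by omega) (Fin.init s) hinit
        (fun i => h1 _) (fun h => hb2) (fun h => hc2)
      obtain ⟨B, hB⟩ := extend_snoc m' (Fin.init s) B' hB' (s (Fin.last m'))
        (h1 _) (by
          have h0 : s (Fin.last m') ≤ s ⟨0, by omega⟩ := hanti (by simp [Fin.le_def])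
          omega)
      rw [Fin.snoc_init_self] at hB
      exact ⟨B, hB⟩
    · have heq : 2 * s ⟨0, by omega⟩ = m' + 3 := by omega
      by_cases hc3 : s ⟨1, by omega⟩ = s ⟨0, by omega⟩
      · exact case_three_b (m' + 1) hm s hanti h1 hb2 (by omega) hc3
      · -- peel the first (largest) size
        have hlt : s ⟨1, by omega⟩ < s ⟨0, by omega⟩ := by
          refine lt_of_le_of_ne ?_ hc3
          exact hanti (by simp [Fin.le_def])
        have htail : Antitone (Fin.tail s) := fun a b hab =>
          hanti (Fin.succ_le_succ_iff.mpr hab)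
        obtain ⟨B', hB'⟩ := IH m' (by omega) (by omega) (Fin.tail s) htail
          (fun i => h1 _) (fun h => hs2) (fun h => by
            show 2 * s ⟨1, by omega⟩ ≤ m' + 2
            omega)
        obtain ⟨B, hB⟩ := extend_cons m' (Fin.tail s) B' hB' (s 0)
          (h1 _) (by
            have h00 : s (⟨0, by omega⟩ : Fin (m' + 1)) = s 0 := rfl
            omega)
        rw [Fin.cons_self_tail] at hB
        exact ⟨B, hB⟩


lemma ncard_val_mem {n : ℕ} (T : Finset ℕ) (hT : ∀ t ∈ T, t < n) :
    ({x : Fin n | ↑x ∈ T} : Set (Fin n)).ncard = T.card := by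
  have : ({x : Fin n | ↑x ∈ T} : Set (Fin n)) = ↑(T.attachFin hT) := by
    ext x
    simp [Finset.mem_attachFin]
  rw [this, Set.ncard_coe_finset, Finset.card_attachFin]

lemma forward_lemma (n : ℕ) (hn : 5 ≤ n) (A : Fin (n - 2) → Set (Fin n))
    (hA : ∀ i, 1 ≤ (A i).ncard ∧ 2 * (A i).ncard ≤ n)
    (hcount : ¬ (n - 3 ≤ Set.ncard {i : Fin (n - 2) | (A i).ncard = 1})) :
    ∃ g : Fin (n - 2) → Equiv.Perm (Fin n),
      (⨅ i, conjSub (g i) (setStab (A i))) = ⊥ := by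
  classical
  set a : Fin (n - 2) → ℕ := fun i => (A i).ncard with hadef
  -- find two indices with a ≥ 2
  have hKcard : 2 ≤ (Finset.univ.filter (fun i : Fin (n - 2) => ¬ a i = 1)).card := by
    have h1 : {i : Fin (n - 2) | (A i).ncard = 1}.ncard
        = (Finset.univ.filter (fun i : Fin (n - 2) => a i = 1)).card := by
      rw [Set.ncard_eq_toFinset_card']
      congr 1
      ext i; simp [hadef]
    have h2 := Finset.card_filter_add_card_filter_not
      (s := (Finset.univ : Finset (Fin (n - 2)))) (p := fun i => a i = 1)
    have h3 : (Finset.univ : Finset (Fin (n - 2))).card = n - 2 := by simp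
    omega
  obtain ⟨i1, hi1, i2, hi2, hi12⟩ := Finset.one_lt_card.mp hKcard
  rw [Finset.mem_filter] at hi1 hi2
  have ha1 : 2 ≤ a i1 := by
    have h' := (hA i1).1
    have : a i1 = (A i1).ncard := rfl
    omega
  have ha2 : 2 ≤ a i2 := by
    have h' := (hA i2).1
    have : a i2 = (A i2).ncard := rfl
    omega
  -- sort descending
  set σ := Tuple.sort a with hσdef
  set ρ : Equiv.Perm (Fin (n - 2)) := σ.symm.trans Fin.revPerm with hρdef
  set s : Fin (n - 2) → ℕ := fun j => a (σ (Fin.rev j)) with hsdef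
  have hρs : ∀ i, s (ρ i) = a i := by
    intro i
    show a (σ (Fin.rev (Fin.revPerm (σ.symm i)))) = a i
    rw [Fin.revPerm_apply, Fin.rev_rev, Equiv.apply_symm_apply]
  have hanti : Antitone s := by
    intro j j' hj
    exact Tuple.monotone_sort a (Fin.rev_le_rev.mpr hj)
  have hs1 : ∀ j, 1 ≤ s j := fun j => (hA _).1
  have hsb : ∀ h : 0 < n - 2, 2 * s ⟨0, h⟩ ≤ (n - 2) + 2 := by
    intro h
    have := (hA (σ (Fin.rev ⟨0, h⟩))).2
    have hn2 : n - 2 + 2 = n := by omega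
    rw [hn2]
    exact this
  have hs2nd : ∀ h : 1 < n - 2, 2 ≤ s ⟨1, h⟩ := by
    intro h
    by_contra hs2
    push_neg at hs2
    have hmono : ∀ j : Fin (n - 2), (⟨1, h⟩ : Fin (n - 2)) ≤ j → s j ≤ 1 := by
      intro j hj
      exact le_trans (hanti hj) (by omega)
    have hval : ∀ i : Fin (n - 2), 2 ≤ a i → (ρ i).val = 0 := by
      intro i hi
      by_contra hv
      have : (⟨1, h⟩ : Fin (n - 2)) ≤ ρ i := by
        rw [Fin.le_def]
        simp only [Fin.val_mk]
        omega
      have := hmono _ this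
      rw [hρs i] at this
      omega
    have : ρ i1 = ρ i2 := Fin.ext (by rw [hval i1 ha1, hval i2 ha2])
    exact hi12 (ρ.injective this)
  obtain ⟨B, hBcard, hBrange, hBne, hBsep⟩ :=
    windowLemma (n - 2) (by omega) s hanti hs1 hs2nd hsb
  have hBlt : ∀ j, ∀ t ∈ B j, t < n := by
    intro j t ht
    have := hBrange j ht
    rw [Finset.mem_range] at this
    omega
  set C : Fin (n - 2) → Set (Fin n) := fun i => {x : Fin n | ↑x ∈ B (ρ i)} with hCdef
  have hCcard : ∀ i, (C i).ncard = a i := by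
    intro i
    show ({x : Fin n | ↑x ∈ B (ρ i)} : Set (Fin n)).ncard = a i
    rw [ncard_val_mem (B (ρ i)) (hBlt (ρ i)), hBcard (ρ i), hρs i]
  have hgex : ∀ i, ∃ g : Equiv.Perm (Fin n), ⇑g '' A i = C i := by
    intro i
    exact exists_perm_image_of_ncard_eq (A i) (C i) (by rw [hCcard i])
  choose g hg using hgex
  refine ⟨g, ?_⟩
  rw [Subgroup.eq_bot_iff_forall]
  intro h hmem
  have hstab : ∀ i, ⇑h '' C i = C i := by
    intro i
    have := Subgroup.mem_iInf.mp hmem i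
    rw [conjSub_setStab, hg i] at this
    exact this
  have hiff : ∀ i (x : Fin n), x ∈ C i ↔ h x ∈ C i := by
    intro i x
    constructor
    · intro hx
      rw [← hstab i]
      exact Set.mem_image_of_mem _ hx
    · intro hx
      rw [← hstab i] at hx
      obtain ⟨w, hw, hwx⟩ := hx
      rwa [← h.injective hwx]
  -- separation of distinct points of Fin n
  have main : ∀ u v : Fin n, u.val < v.val → ∃ i, ¬(u ∈ C i ↔ v ∈ C i) := by
    intro u v huv
    rcases Nat.lt_or_ge v.val ((n - 2) + 1) with hv | hv
    · obtain ⟨j, hj⟩ := hBsep u.val v.val huv hv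
      refine ⟨ρ.symm j, ?_⟩
      show ¬((u : ℕ) ∈ B (ρ (ρ.symm j)) ↔ (v : ℕ) ∈ B (ρ (ρ.symm j)))
      rw [ρ.apply_symm_apply]
      exact hj
    · obtain ⟨j, hj⟩ := hBne u.val (by have := v.isLt; omega)
      refine ⟨ρ.symm j, ?_⟩
      show ¬((u : ℕ) ∈ B (ρ (ρ.symm j)) ↔ (v : ℕ) ∈ B (ρ (ρ.symm j)))
      rw [ρ.apply_symm_apply]
      intro hif
      have hv2 := hBrange j (hif.mp hj)
      rw [Finset.mem_range] at hv2
      omega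
  ext x
  simp only [Equiv.Perm.coe_one, id_eq]
  by_contra hne
  have hxx : x ≠ h x := fun hh => hne (congrArg Fin.val hh.symm)
  rcases lt_trichotomy x.val (h x).val with hlt | heq | hgt
  · obtain ⟨i, hi⟩ := main x (h x) hlt
    exact hi (hiff i x)
  · exact hxx (Fin.ext heq)
  · obtain ⟨i, hi⟩ := main (h x) x hgt
    exact hi (Iff.symm (hiff i x))


theorem nonregular_intransitive_tuples_iff (n : ℕ) (hn : 5 ≤ n)
    (A : Fin (n - 2) → Set (Fin n))
    (hA : ∀ i, 1 ≤ (A i).ncard ∧ 2 * (A i).ncard ≤ n) :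
    (∀ g : Fin (n - 2) → Equiv.Perm (Fin n),
        (⨅ i, conjSub (g i) (setStab (A i))) ≠ ⊥) ↔
      n - 3 ≤ Set.ncard {i : Fin (n - 2) | (A i).ncard = 1} := by
  constructor
  · intro hreg
    by_contra hcount
    obtain ⟨g, hg⟩ := forward_lemma n hn A hA hcount
    exact hreg g hg
  · intro hcount g
    have himg : {i : Fin (n - 2) | ((fun i => ⇑(g i) '' A i) i).ncard = 1}
        = {i : Fin (n - 2) | (A i).ncard = 1} := by
      ext i
      simp only [Set.mem_setOf_eq, Set.ncard_image_of_injective _ (g i).injective]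
    obtain ⟨h, hne, hstab⟩ := backward_lemma n hn (fun i => ⇑(g i) '' A i)
      (by rw [himg]; exact hcount)
    intro hbot
    have hmem : h ∈ (⨅ i, conjSub (g i) (setStab (A i))) := by
      rw [Subgroup.mem_iInf]
      intro i
      rw [conjSub_setStab]
      exact hstab i
    rw [hbot, Subgroup.mem_bot] at hmem
    exact hne hmem
end
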